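/- arXiv:2501.11467 — 4 statements merged into one kernel-verified Lean document; each statement's English description precedes it below -/
import Mathlib

section
/- Let (x, r) ∈ [0,1]^S × (ℕ∞)^S satisfy: 1) D^max(r) ≤ r, 2) x ≤ Φ^min(x), and 3) for all s ∉ T, x(s) > 0 implies r(s) < ∞. Then Pr^{min}_s(◇T) ≥ x(s) for all states s. -/
open scoped ENNReal
open Classical

noncomputable section

/-- Optimization direction: `dmin` for minimization, `dmax` for maximization. -/
inductive ODir | dmin | dmax

namespace ODir

/-- Apply the optimization direction to a set in a complete lattice. -/
def run {α : Type*} [CompleteLattice α] : ODir → Set α → α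
  | dmin => sInf
  | dmax => sSup

/-- The dual optimization direction: ¬min = max, ¬max = min. -/
def neg : ODir → ODir
  | dmin => dmax
  | dmax => dmin

end ODir

/-- A finite Markov decision process with states `S` and actions `A`:
a transition probability function `P` such that for each state and action the
probabilities sum to `1` or `0`, and every state has at least one enabled action. -/
structure CertMDP (S A : Type) [Fintype S] [Fintype A] where
  P : S → A → S → ℝ≥0∞
  sum_P : ∀ s a, (∑ s' : S, P s a s') = 1 ∨ (∑ s' : S, P s a s') = 0
  exists_enabled : ∀ s, ∃ a, (∑ s' : S, P s a s') = 1

namespace CertMDP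

variable {S A : Type} [Fintype S] [Fintype A]

/-- The set of actions enabled in state `s`. -/
def enabled (M : CertMDP S A) (s : S) : Set A := {a | (∑ s' : S, M.P s a s') = 1}

/-- The `a`-successors of `s`. -/
def Post (M : CertMDP S A) (s : S) (a : A) : Set S := {s' | M.P s a s' ≠ 0}

/-- Memoryless deterministic strategies. -/
def Strat (M : CertMDP S A) := {σ : S → A // ∀ s, σ s ∈ M.enabled s}

/-- Step-bounded reachability probability of `T` in the Markov chain induced by `σ`. -/
def prBounded (M : CertMDP S A) (σ : M.Strat) (T : Set S) : ℕ → S → ℝ≥0∞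
  | 0, s => if s ∈ T then 1 else 0
  | n + 1, s => if s ∈ T then 1 else ∑ s' : S, M.P s (σ.1 s) s' * prBounded M σ T n s'

/-- Reachability probability of `T` from `s` in the Markov chain induced by `σ`. -/
def prReach (M : CertMDP S A) (σ : M.Strat) (T : Set S) (s : S) : ℝ≥0∞ :=
  ⨆ n, M.prBounded σ T n s

/-- Optimal (min/max over memoryless deterministic strategies) reachability probability. -/
def optPr (M : CertMDP S A) (o : ODir) (T : Set S) (s : S) : ℝ≥0∞ :=
  o.run {p | ∃ σ : M.Strat, p = M.prReach σ T s}

/-- The distance operator `D^opt` on `(ℕ∞)^S`. -/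
def dist (M : CertMDP S A) (o : ODir) (T : Set S) (r : S → ℕ∞) : S → ℕ∞ :=
  fun s => if s ∈ T then 0
    else 1 + o.run ((fun a => sInf (r '' M.Post s a)) '' M.enabled s)

/-- The complementary distance operator `D̃^opt` on `(ℕ∞)^S`, with Iverson bracket. -/
def cdist (M : CertMDP S A) (o : ODir) (T : Set S) (r : S → ℕ∞) : S → ℕ∞ :=
  fun s => if s ∈ T then ⊤
    else o.run ((fun a => sInf (r '' M.Post s a) +
      (if ∃ u ∈ M.Post s a, ∃ v ∈ M.Post s a, r u ≠ r v then 1 else 0)) '' M.enabled s)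

/-- The Bellman operator `Φ^opt` for reachability. -/
def bellman (M : CertMDP S A) (o : ODir) (T : Set S) (x : S → ℝ≥0∞) : S → ℝ≥0∞ :=
  fun s => if s ∈ T then 1
    else o.run ((fun a => ∑ s' : S, M.P s a s' * x s') '' M.enabled s)

/-- The distance operator `D^σ` in the Markov chain induced by strategy `σ`. -/
def distS (M : CertMDP S A) (σ : M.Strat) (T : Set S) (r : S → ℕ∞) : S → ℕ∞ :=
  fun s => if s ∈ T then 0 else 1 + sInf (r '' M.Post s (σ.1 s))

/-- The Bellman operator `Φ^σ` in the Markov chain induced by strategy `σ`. -/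
def bellmanS (M : CertMDP S A) (σ : M.Strat) (T : Set S) (x : S → ℝ≥0∞) : S → ℝ≥0∞ :=
  fun s => if s ∈ T then 1 else ∑ s' : S, M.P s (σ.1 s) s' * x s'

/-- Step-bounded cumulated expected reward (target states absorb with reward 0). -/
def erBounded (M : CertMDP S A) (σ : M.Strat) (T : Set S) (rew : S → ℝ≥0∞) : ℕ → S → ℝ≥0∞
  | 0, _ => 0
  | n + 1, s => if s ∈ T then 0
      else rew s + ∑ s' : S, M.P s (σ.1 s) s' * erBounded M σ T rew n s'

/-- Expected reward accumulated until reaching `T` under `σ`, where paths never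
reaching `T` receive reward `∞` (the `* = ∞` semantics). -/
def expRew (M : CertMDP S A) (σ : M.Strat) (T : Set S) (rew : S → ℝ≥0∞) (s : S) : ℝ≥0∞ :=
  if M.prReach σ T s = 1 then ⨆ n, M.erBounded σ T rew n s else ⊤

/-- Optimal expected reward accumulated until reaching `T`. -/
def optER (M : CertMDP S A) (o : ODir) (T : Set S) (rew : S → ℝ≥0∞) (s : S) : ℝ≥0∞ :=
  o.run {p | ∃ σ : M.Strat, p = M.expRew σ T rew s}

/-- The Bellman operator `E^opt` for expected rewards. -/
def bellmanR (M : CertMDP S A) (o : ODir) (T : Set S) (rew : S → ℝ≥0∞) (x : S → ℝ≥0∞) :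
    S → ℝ≥0∞ :=
  fun s => if s ∈ T then 0
    else rew s + o.run ((fun a => ∑ s' : S, M.P s a s' * x s') '' M.enabled s)

end CertMDP

namespace CertMDP

variable {S A : Type} [Fintype S] [Fintype A]

lemma aux_prBounded_le_one (M : CertMDP S A) (σ : M.Strat) (T : Set S) :
    ∀ n s, M.prBounded σ T n s ≤ 1 := by
  intro n
  induction n with
  | zero => intro s; unfold prBounded; split <;> simp
  | succ n ih =>
    intro s
    unfold prBounded
    split
    · exact le_rfl
    · calc ∑ s' : S, M.P s (σ.1 s) s' * M.prBounded σ T n s'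
          ≤ ∑ s' : S, M.P s (σ.1 s) s' * 1 :=
            Finset.sum_le_sum fun i _ => mul_le_mul_right (ih i) _
        _ = 1 := by simp only [mul_one]; exact σ.2 s

lemma aux_prBounded_mono (M : CertMDP S A) (σ : M.Strat) (T : Set S) :
    ∀ n s, M.prBounded σ T n s ≤ M.prBounded σ T (n + 1) s := by
  intro n
  induction n with
  | zero =>
    intro s
    unfold prBounded
    split
    · simp [prBounded]
    · exact zero_le
  | succ n ih =>
    intro s
    show M.prBounded σ T (n + 1) s ≤ M.prBounded σ T (n + 2) s
    unfold prBounded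
    split
    · exact le_rfl
    · exact Finset.sum_le_sum fun i _ => mul_le_mul_right (ih i) _

lemma aux_prBounded_monotone (M : CertMDP S A) (σ : M.Strat) (T : Set S) (s : S) :
    Monotone (fun n => M.prBounded σ T n s) :=
  monotone_nat_of_le_succ fun n => aux_prBounded_mono M σ T n s

lemma aux_prReach_le_one (M : CertMDP S A) (σ : M.Strat) (T : Set S) (s : S) :
    M.prReach σ T s ≤ 1 :=
  iSup_le fun n => aux_prBounded_le_one M σ T n s

lemma aux_prReach_target (M : CertMDP S A) (σ : M.Strat) (T : Set S) {s : S} (hs : s ∈ T) :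
    M.prReach σ T s = 1 := by
  refine le_antisymm (aux_prReach_le_one M σ T s) ?_
  have : M.prBounded σ T 0 s = 1 := by simp [prBounded, hs]
  exact this ▸ le_iSup (fun n => M.prBounded σ T n s) 0

lemma aux_step (M : CertMDP S A) (σ : M.Strat) (T : Set S) {s : S} (hs : s ∉ T) :
    ∑ s' : S, M.P s (σ.1 s) s' * M.prReach σ T s' ≤ M.prReach σ T s := by
  have h1 : ∑ s' : S, M.P s (σ.1 s) s' * M.prReach σ T s'
      = ⨆ n, ∑ s' : S, M.P s (σ.1 s) s' * M.prBounded σ T n s' := by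
    calc ∑ s' : S, M.P s (σ.1 s) s' * M.prReach σ T s'
        = ∑ s' : S, ⨆ n, M.P s (σ.1 s) s' * M.prBounded σ T n s' := by
          simp [prReach, ENNReal.mul_iSup]
      _ = ⨆ n, ∑ s' : S, M.P s (σ.1 s) s' * M.prBounded σ T n s' :=
          ENNReal.finsetSum_iSup_of_monotone fun a =>
            fun i j hij => mul_le_mul_right (aux_prBounded_monotone M σ T a hij) _
  rw [h1]
  refine iSup_le fun n => ?_
  have : M.prBounded σ T (n + 1) s
      = ∑ s' : S, M.P s (σ.1 s) s' * M.prBounded σ T n s' := by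
    show (if s ∈ T then 1 else ∑ s' : S, M.P s (σ.1 s) s' * M.prBounded σ T n s') = _
    rw [if_neg hs]
  exact this ▸ le_iSup (fun n => M.prBounded σ T n s) (n + 1)

lemma aux_le_prReach (M : CertMDP S A) (T : Set S)
    (x : S → ℝ≥0∞) (r : S → ℕ∞) (hx1 : ∀ s, x s ≤ 1)
    (h1 : M.dist ODir.dmax T r ≤ r)
    (h2 : x ≤ M.bellman ODir.dmin T x)
    (h3 : ∀ s ∉ T, 0 < x s → r s < ⊤) (σ : M.Strat) :
    ∀ s, x s ≤ M.prReach σ T s := by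
  intro s
  by_contra hxy
  set y : S → ℝ≥0∞ := M.prReach σ T with hy
  set d : S → ℝ≥0∞ := fun t => x t - y t with hd
  obtain ⟨m, -, hm⟩ := Finset.exists_max_image Finset.univ d ⟨s, Finset.mem_univ s⟩
  set D := d m with hDdef
  have hm' : ∀ t, d t ≤ D := fun t => hm t (Finset.mem_univ t)
  have hdlex : ∀ t, d t ≤ x t := fun t => tsub_le_self
  have hD1 : D ≤ 1 := le_trans (hdlex m) (hx1 m)
  have hDne : D ≠ ⊤ := (lt_of_le_of_lt hD1 ENNReal.one_lt_top).ne
  have hDpos : 0 < D := lt_of_lt_of_le (tsub_pos_of_lt (not_le.mp hxy)) (hm' s)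
  have hAne : (Finset.univ.filter (fun t => d t = D)).Nonempty :=
    ⟨m, by simp [hDdef]⟩
  obtain ⟨s0, hs0mem, hs0min⟩ := Finset.exists_min_image _ r hAne
  have hds0 : d s0 = D := (Finset.mem_filter.mp hs0mem).2
  have hs0T : s0 ∉ T := by
    intro hT
    have hy1 : y s0 = 1 := aux_prReach_target M σ T hT
    have : d s0 = 0 := by
      rw [hd]; simp only [hy1]; exact tsub_eq_zero_of_le (hx1 s0)
    rw [this] at hds0
    exact absurd hds0.symm hDpos.ne'
  have hx0 : 0 < x s0 := lt_of_lt_of_le (hds0 ▸ hDpos) (hdlex s0)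
  have hr0 : r s0 ≠ ⊤ := (h3 s0 hs0T hx0).ne
  set a0 := σ.1 s0 with ha0def
  have ha0 : a0 ∈ M.enabled s0 := σ.2 s0
  -- find a successor with strictly smaller rank
  have h1s0 := h1 s0
  simp only [dist, ODir.run, hs0T, if_false] at h1s0
  have hInf : 1 + sInf (r '' M.Post s0 a0) ≤ r s0 :=
    le_trans (add_le_add_right (le_sSup (Set.mem_image_of_mem (fun a => sInf (r '' M.Post s0 a)) ha0)) 1) h1s0
  have hlt : sInf (r '' M.Post s0 a0) < r s0 := by
    by_contra hge
    push_neg at hge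
    have h5 : r s0 + 1 ≤ r s0 :=
      le_trans (by rw [add_comm]; exact add_le_add_right hge 1) hInf
    exact absurd ((ENat.add_one_le_iff hr0).mp h5) (lt_irrefl _)
  obtain ⟨v, hv, hvlt⟩ := sInf_lt_iff.mp hlt
  obtain ⟨u, huPost, rfl⟩ := hv
  have hdu : d u < D := by
    rcases lt_or_eq_of_le (hm' u) with h | h
    · exact h
    · exfalso
      have humem : u ∈ Finset.univ.filter (fun t => d t = D) := by
        simp [h]
      exact absurd hvlt (not_lt.mpr (hs0min u humem))
  have hsum1 : (∑ s' : S, M.P s0 a0 s') = 1 := ha0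
  have hPle1 : ∀ s', M.P s0 a0 s' ≤ 1 := fun s' =>
    hsum1 ▸ Finset.single_le_sum (f := fun s' => M.P s0 a0 s')
      (fun i _ => zero_le) (Finset.mem_univ s')
  have key1 : x s0 ≤ ∑ s' : S, M.P s0 a0 s' * x s' := by
    have h6 := h2 s0
    simp only [bellman, ODir.run, hs0T, if_false] at h6
    exact le_trans h6 (sInf_le (Set.mem_image_of_mem (fun a => ∑ s' : S, M.P s0 a s' * x s') ha0))
  have key2 : x s0 ≤ (∑ s' : S, M.P s0 a0 s' * d s') + y s0 :=
    calc x s0 ≤ ∑ s' : S, M.P s0 a0 s' * x s' := key1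
      _ ≤ ∑ s' : S, M.P s0 a0 s' * (d s' + y s') :=
          Finset.sum_le_sum fun i _ => mul_le_mul_right (by
            rw [hd]; exact le_tsub_add) _
      _ = (∑ s' : S, M.P s0 a0 s' * d s') + ∑ s' : S, M.P s0 a0 s' * y s' := by
          simp [mul_add, Finset.sum_add_distrib]
      _ ≤ (∑ s' : S, M.P s0 a0 s' * d s') + y s0 :=
          add_le_add_right (aux_step M σ T hs0T) _
  have key3 : D ≤ ∑ s' : S, M.P s0 a0 s' * d s' := by
    rw [← hds0, hd]
    exact tsub_le_iff_right.mpr key2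
  have key4 : (∑ s' : S, M.P s0 a0 s' * d s') < D := by
    have herase : ∑ s' ∈ Finset.univ.erase u, M.P s0 a0 s' * d s' + M.P s0 a0 u * d u
        = ∑ s' : S, M.P s0 a0 s' * d s' :=
      Finset.sum_erase_add _ _ (Finset.mem_univ u)
    rw [← herase]
    have hfin : (∑ s' ∈ Finset.univ.erase u, M.P s0 a0 s' * D) ≠ ⊤ := by
      refine (lt_of_le_of_lt ?_ ENNReal.one_lt_top).ne
      calc ∑ s' ∈ Finset.univ.erase u, M.P s0 a0 s' * D
          ≤ ∑ s' ∈ Finset.univ.erase u, M.P s0 a0 s' * 1 :=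
            Finset.sum_le_sum fun i _ => mul_le_mul_right hD1 _
        _ ≤ ∑ s' : S, M.P s0 a0 s' * 1 :=
            Finset.sum_le_sum_of_subset (Finset.erase_subset _ _)
        _ = 1 := by simpa using hsum1
    have hPu : M.P s0 a0 u ≠ ⊤ := (lt_of_le_of_lt (hPle1 u) ENNReal.one_lt_top).ne
    calc ∑ s' ∈ Finset.univ.erase u, M.P s0 a0 s' * d s' + M.P s0 a0 u * d u
        ≤ ∑ s' ∈ Finset.univ.erase u, M.P s0 a0 s' * D + M.P s0 a0 u * d u :=
          add_le_add_left (Finset.sum_le_sum fun i _ => mul_le_mul_right (hm' i) _) _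
      _ < ∑ s' ∈ Finset.univ.erase u, M.P s0 a0 s' * D + M.P s0 a0 u * D :=
          ENNReal.add_lt_add_left hfin (ENNReal.mul_lt_mul_right huPost hPu hdu)
      _ = ∑ s' : S, M.P s0 a0 s' * D := Finset.sum_erase_add _ _ (Finset.mem_univ u)
      _ = (∑ s' : S, M.P s0 a0 s') * D := (Finset.sum_mul _ _ _).symm
      _ = D := by rw [hsum1, one_mul]
  exact absurd (lt_of_le_of_lt key3 key4) (lt_irrefl D)

end CertMDP

/-- Certificates for lower bounds on minimal reachability probabilities:
if `D^max(r) ≤ r`, `x ≤ Φ^min(x)` and positivity of `x` outside `T` implies finite rank,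
then `x` is a lower bound on the minimal reachability probabilities. -/
theorem stmt14 {S A : Type} [Fintype S] [Fintype A] (M : CertMDP S A) (T : Set S)
    (x : S → ℝ≥0∞) (r : S → ℕ∞) (hx1 : ∀ s, x s ≤ 1)
    (h1 : M.dist ODir.dmax T r ≤ r)
    (h2 : x ≤ M.bellman ODir.dmin T x)
    (h3 : ∀ s ∉ T, 0 < x s → r s < ⊤) :
    ∀ s, x s ≤ M.optPr ODir.dmin T s := by
  intro s
  refine le_sInf ?_
  rintro p ⟨σ, rfl⟩
  exact CertMDP.aux_le_prReach M T x r hx1 h1 h2 h3 σ s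
end
end

section
/- Let σ be a memoryless deterministic strategy and let (x, r) ∈ [0,1]^S × (ℕ∞)^S satisfy in the induced Markov chain M^σ: 1) D^σ(r) ≤ r, 2) x ≤ Φ^σ(x), and 3) for all s ∉ T, x(s) > 0 implies r(s) < ∞. Then for all states s, Pr^{max}_s(◇T) ≥ Pr^σ_s(◇T) ≥ x(s). -/
open scoped ENNReal
open Classical

noncomputable section

namespace CertMDP

variable {S A : Type} [Fintype S] [Fintype A] (M : CertMDP S A) (σ : M.Strat) (T : Set S)

lemma aux_prBounded_mono_s15 : Monotone (fun n => M.prBounded σ T n) := by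
  refine monotone_nat_of_le_succ ?_
  intro n
  induction n with
  | zero =>
    intro s
    by_cases h : s ∈ T <;> simp [prBounded, h]
  | succ n ih =>
    intro s
    by_cases h : s ∈ T
    · simp [prBounded, h]
    · simp only [prBounded, h, if_false]
      exact Finset.sum_le_sum fun s' _ => mul_le_mul_right (ih s') _

lemma aux_prBounded_target {s : S} (hs : s ∈ T) (n : ℕ) : M.prBounded σ T n s = 1 := by
  cases n <;> simp [prBounded, hs]

lemma aux_one_le_prReach_target {s : S} (hs : s ∈ T) : 1 ≤ M.prReach σ T s := by
  have := le_iSup (fun n => M.prBounded σ T n s) 0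
  rwa [aux_prBounded_target M σ T hs 0] at this

lemma aux_sum_P_one (s : S) : (∑ s' : S, M.P s (σ.1 s) s') = 1 := σ.2 s

lemma aux_P_ne_top (s s' : S) : M.P s (σ.1 s) s' ≠ ⊤ := by
  intro h
  have hle : M.P s (σ.1 s) s' ≤ ∑ t : S, M.P s (σ.1 s) t :=
    Finset.single_le_sum (f := fun t => M.P s (σ.1 s) t) (fun _ _ => zero_le)
      (Finset.mem_univ s')
  rw [aux_sum_P_one M σ, h] at hle
  exact ENNReal.one_ne_top (top_le_iff.mp hle)

lemma aux_prReach_fix {s : S} (hs : s ∉ T) :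
    M.prReach σ T s = ∑ s' : S, M.P s (σ.1 s) s' * M.prReach σ T s' := by
  have h1 : M.prReach σ T s = ⨆ n, M.prBounded σ T (n + 1) s := by
    refine le_antisymm (iSup_le fun n => le_iSup_of_le n ?_)
      (iSup_le fun n => le_iSup (fun m => M.prBounded σ T m s) (n + 1))
    exact aux_prBounded_mono_s15 M σ T (Nat.le_succ n) s
  rw [h1]
  have h2 : ∀ n, M.prBounded σ T (n + 1) s
      = ∑ s' : S, M.P s (σ.1 s) s' * M.prBounded σ T n s' := by
    intro n; simp [prBounded, hs]
  simp only [h2]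
  rw [show (∑ s' : S, M.P s (σ.1 s) s' * M.prReach σ T s')
      = ∑ s' : S, ⨆ n, M.P s (σ.1 s) s' * M.prBounded σ T n s' by
    refine Finset.sum_congr rfl fun s' _ => ?_
    rw [prReach, ENNReal.mul_iSup]]
  exact (ENNReal.finsetSum_iSup_of_monotone
    (f := fun s' n => M.P s (σ.1 s) s' * M.prBounded σ T n s')
    (fun s' m n hmn => mul_le_mul_right (aux_prBounded_mono_s15 M σ T hmn s') _)).symm

lemma aux_step_le {s s' : S} (hs : s ∉ T) :
    M.P s (σ.1 s) s' * M.prReach σ T s' ≤ M.prReach σ T s := by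
  rw [aux_prReach_fix M σ T hs]
  exact Finset.single_le_sum (f := fun t => M.P s (σ.1 s) t * M.prReach σ T t)
    (fun _ _ => zero_le) (Finset.mem_univ s')

lemma aux_closed_zero (U : Set S) (hUT : ∀ s ∈ U, s ∉ T)
    (hcl : ∀ s ∈ U, ∀ s', M.P s (σ.1 s) s' ≠ 0 → s' ∈ U) :
    ∀ n, ∀ s ∈ U, M.prBounded σ T n s = 0 := by
  intro n
  induction n with
  | zero => intro s hs; simp [prBounded, hUT s hs]
  | succ n ih =>
    intro s hs
    simp only [prBounded, hUT s hs, if_false]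
    refine Finset.sum_eq_zero fun s' _ => ?_
    by_cases hP : M.P s (σ.1 s) s' = 0
    · simp [hP]
    · rw [ih s' (hcl s hs s' hP), mul_zero]

lemma aux_pos_of_rank {r : S → ℕ∞} (h1 : M.distS σ T r ≤ r) :
    ∀ n : ℕ, ∀ s : S, r s ≤ (n : ℕ∞) → 0 < M.prReach σ T s := by
  intro n
  induction n with
  | zero =>
    intro s hs
    by_cases hT : s ∈ T
    · exact lt_of_lt_of_le one_pos (aux_one_le_prReach_target M σ T hT)
    · exfalso
      have := h1 s
      simp only [distS, hT, if_false] at this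
      have h1le : (1 : ℕ∞) ≤ r s := le_trans le_self_add this
      have : (1 : ℕ∞) ≤ 0 := le_trans h1le hs
      simp at this
  | succ n ih =>
    intro s hs
    by_cases hT : s ∈ T
    · exact lt_of_lt_of_le one_pos (aux_one_le_prReach_target M σ T hT)
    · have hd := h1 s
      simp only [distS, hT, if_false] at hd
      have hle : 1 + sInf (r '' M.Post s (σ.1 s)) ≤ 1 + (n : ℕ∞) := by
        refine le_trans (le_trans hd hs) ?_
        rw [show ((n + 1 : ℕ) : ℕ∞) = 1 + (n : ℕ∞) by push_cast; ring]
      have hinf : sInf (r '' M.Post s (σ.1 s)) ≤ (n : ℕ∞) :=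
        (WithTop.add_le_add_iff_left (by simp : (1 : ℕ∞) ≠ ⊤)).mp hle
      have hne : (r '' M.Post s (σ.1 s)).Nonempty := by
        by_contra hemp
        rw [Set.not_nonempty_iff_eq_empty] at hemp
        rw [hemp, sInf_empty] at hinf
        exact (WithTop.coe_lt_top n).not_ge hinf
      obtain ⟨s', hs', hrs'⟩ := hne.csInf_mem (Set.toFinite _)
      have hrs'le : r s' ≤ (n : ℕ∞) := hrs' ▸ hinf
      have hpos := ih s' hrs'le
      have hP : M.P s (σ.1 s) s' ≠ 0 := hs'
      calc (0 : ℝ≥0∞) < M.P s (σ.1 s) s' * M.prReach σ T s' :=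
            ENNReal.mul_pos hP (ne_of_gt hpos)
        _ ≤ M.prReach σ T s := aux_step_le M σ T hT

end CertMDP

/-- Certificates for lower bounds on maximal reachability probabilities with an explicit
witness strategy `σ`: conditions in the induced Markov chain `M^σ` yield
`Pr^{max}_s(◇T) ≥ Pr^σ_s(◇T) ≥ x s`. -/
theorem stmt15 {S A : Type} [Fintype S] [Fintype A] (M : CertMDP S A) (T : Set S)
    (σ : M.Strat) (x : S → ℝ≥0∞) (r : S → ℕ∞) (hx1 : ∀ s, x s ≤ 1)
    (h1 : M.distS σ T r ≤ r)
    (h2 : x ≤ M.bellmanS σ T x)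
    (h3 : ∀ s ∉ T, 0 < x s → r s < ⊤) :
    ∀ s, x s ≤ M.prReach σ T s ∧ M.prReach σ T s ≤ M.optPr ODir.dmax T s := by
  intro s
  refine ⟨?_, le_sSup ⟨σ, rfl⟩⟩
  set f : S → ℝ≥0∞ := fun t => x t - M.prReach σ T t with hf
  obtain ⟨s₀, -, hs₀⟩ := Finset.exists_max_image Finset.univ f ⟨s, Finset.mem_univ s⟩
  set d := f s₀ with hd
  by_cases hd0 : d = 0
  · have : f s = 0 := le_antisymm (hd0 ▸ hs₀ s (Finset.mem_univ s)) zero_le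
    exact tsub_eq_zero_iff_le.mp this
  · exfalso
    have hdpos : 0 < d := pos_iff_ne_zero.mpr hd0
    set U : Set S := {t | d ≤ f t} with hU
    have hs₀U : s₀ ∈ U := le_refl d
    have hUT : ∀ t ∈ U, t ∉ T := by
      intro t ht hT
      have hw1 : (1 : ℝ≥0∞) ≤ M.prReach σ T t := M.aux_one_le_prReach_target σ T hT
      have hft : f t = 0 := tsub_eq_zero_iff_le.mpr (le_trans (hx1 t) hw1)
      have hdle : d ≤ f t := ht
      rw [hft] at hdle
      exact hdpos.not_ge hdle
    have hcl : ∀ t ∈ U, ∀ s', M.P t (σ.1 t) s' ≠ 0 → s' ∈ U := by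
      intro t ht s' hP
      by_contra hs'U
      have hfs' : f s' < d := lt_of_not_ge hs'U
      have htT : t ∉ T := hUT t ht
      have key1 : f t ≤ ∑ u : S, M.P t (σ.1 t) u * f u := by
        rw [hf]
        rw [tsub_le_iff_right, M.aux_prReach_fix σ T htT, ← Finset.sum_add_distrib]
        have hx2 := h2 t
        simp only [CertMDP.bellmanS, htT, if_false] at hx2
        refine le_trans hx2 (Finset.sum_le_sum fun u _ => ?_)
        rw [← mul_add]
        exact mul_le_mul_right le_tsub_add _
      have key2 : (∑ u : S, M.P t (σ.1 t) u * f u) < d := by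
        have hlt : (∑ u : S, M.P t (σ.1 t) u * f u) < ∑ u : S, M.P t (σ.1 t) u * d := by
          have hsplit : ∀ g : S → ℝ≥0∞,
              (∑ u : S, g u) = g s' + ∑ u ∈ Finset.univ.erase s', g u :=
            fun g => (Finset.add_sum_erase Finset.univ g (Finset.mem_univ s')).symm
          rw [hsplit (fun u => M.P t (σ.1 t) u * f u), hsplit (fun u => M.P t (σ.1 t) u * d)]
          have hfle1 : ∀ u, f u ≤ 1 := fun u => le_trans tsub_le_self (hx1 u)
          have hb : (∑ u ∈ Finset.univ.erase s', M.P t (σ.1 t) u * f u) ≤ 1 := by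
            calc (∑ u ∈ Finset.univ.erase s', M.P t (σ.1 t) u * f u)
                ≤ ∑ u ∈ Finset.univ.erase s', M.P t (σ.1 t) u :=
                  Finset.sum_le_sum fun u _ => mul_le_of_le_one_right' (hfle1 u)
              _ ≤ ∑ u : S, M.P t (σ.1 t) u :=
                  Finset.sum_le_sum_of_subset (Finset.erase_subset _ _)
              _ = 1 := M.aux_sum_P_one σ t
          refine ENNReal.add_lt_add_of_lt_of_le (ne_top_of_le_ne_top ENNReal.one_ne_top hb)
            (ENNReal.mul_lt_mul_right hP (M.aux_P_ne_top σ t s') hfs')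
            (Finset.sum_le_sum fun u _ => mul_le_mul_right (hs₀ u (Finset.mem_univ u)) _)
        rwa [← Finset.sum_mul, M.aux_sum_P_one σ t, one_mul] at hlt
      have hdft : d ≤ f t := ht
      exact absurd (lt_of_le_of_lt (le_trans hdft key1) key2) (lt_irrefl d)
    have hwzero : M.prReach σ T s₀ = 0 := by
      show (⨆ n, M.prBounded σ T n s₀) = 0
      refine le_antisymm (iSup_le fun n => le_of_eq ?_) zero_le
      exact M.aux_closed_zero σ T U hUT hcl n s₀ hs₀U
    have hxpos : 0 < x s₀ := by
      have h' : d ≤ x s₀ := le_trans hs₀U (by rw [hf]; exact tsub_le_self)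
      exact lt_of_lt_of_le hdpos h'
    have hrfin : r s₀ < ⊤ := h3 s₀ (hUT s₀ hs₀U) hxpos
    obtain ⟨n, hn⟩ := WithTop.ne_top_iff_exists.mp (ne_of_lt hrfin)
    have hpos := M.aux_pos_of_rank σ T h1 n s₀ (le_of_eq hn.symm)
    rw [hwzero] at hpos
    exact lt_irrefl 0 hpos
end
end

section
/- Let x ∈ ([0,∞])^S be such that 1) x ≤ E^opt(x), where E^opt is the Bellman operator for expected rewards, and 2) for every state s with Pr^{¬opt}_s(◇T) = 1 it holds that x(s) < ∞. Then x(s) ≤ ExpRew^{opt}_s(◇T) for all states s. -/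
open scoped ENNReal
open Classical

noncomputable section

namespace CertMDP

open Finset Filter

variable {S A : Type} [Fintype S] [Fintype A]

section Aux

variable (M : CertMDP S A)

lemma row_sum (σ : M.Strat) (s : S) : ∑ s' : S, M.P s (σ.1 s) s' = 1 := σ.2 s

lemma P_le_one (σ : M.Strat) (s s' : S) : M.P s (σ.1 s) s' ≤ 1 := by
  conv_rhs => rw [← row_sum M σ s]
  exact Finset.single_le_sum (fun _ _ => zero_le) (Finset.mem_univ s')

variable (σ : M.Strat) (T : Set S)

lemma prBounded_succ_le (n : ℕ) : ∀ s, M.prBounded σ T n s ≤ M.prBounded σ T (n+1) s := by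
  induction n with
  | zero =>
    intro s; by_cases hs : s ∈ T <;> simp [prBounded, hs]
  | succ n ih =>
    intro s
    by_cases hs : s ∈ T
    · simp [prBounded, hs]
    · simp only [prBounded, if_neg hs]
      exact Finset.sum_le_sum fun u _ => mul_le_mul_right (ih u) _

lemma prBounded_monotone (s : S) : Monotone (fun n => M.prBounded σ T n s) :=
  monotone_nat_of_le_succ (fun n => prBounded_succ_le M σ T n s)

lemma prBounded_le_one (n : ℕ) : ∀ s, M.prBounded σ T n s ≤ 1 := by
  induction n with
  | zero => intro s; by_cases hs : s ∈ T <;> simp [prBounded, hs]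
  | succ n ih =>
    intro s
    by_cases hs : s ∈ T
    · simp [prBounded, hs]
    · simp only [prBounded, if_neg hs]
      calc ∑ u : S, M.P s (σ.1 s) u * M.prBounded σ T n u
          ≤ ∑ u : S, M.P s (σ.1 s) u * 1 :=
            Finset.sum_le_sum fun u _ => mul_le_mul_right (ih u) _
        _ = 1 := by simp [row_sum M σ s]

lemma prReach_le_one (s : S) : M.prReach σ T s ≤ 1 :=
  iSup_le fun n => prBounded_le_one M σ T n s

lemma prBounded_le_prReach (n : ℕ) (s : S) : M.prBounded σ T n s ≤ M.prReach σ T s :=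
  le_iSup (fun n => M.prBounded σ T n s) n

lemma prReach_of_mem {s : S} (hs : s ∈ T) : M.prReach σ T s = 1 := by
  have h : ∀ n, M.prBounded σ T n s = 1 := by
    intro n; cases n <;> simp [prBounded, hs]
  simp [prReach, h]

lemma prReach_fix {s : S} (hs : s ∉ T) :
    M.prReach σ T s = ∑ u : S, M.P s (σ.1 s) u * M.prReach σ T u := by
  have h1 : M.prReach σ T s = ⨆ n, M.prBounded σ T (n+1) s := by
    apply le_antisymm
    · exact iSup_le fun n => le_trans (prBounded_succ_le M σ T n s)
        (le_iSup (fun n => M.prBounded σ T (n+1) s) n)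
    · exact iSup_le fun n => prBounded_le_prReach M σ T (n+1) s
  rw [h1]
  simp only [prBounded, if_neg hs]
  rw [show (∑ u : S, M.P s (σ.1 s) u * M.prReach σ T u)
      = ∑ u : S, ⨆ n, M.P s (σ.1 s) u * M.prBounded σ T n u by
    refine Finset.sum_congr rfl fun u _ => ?_
    rw [prReach, ENNReal.mul_iSup]]
  exact (ENNReal.finsetSum_iSup_of_monotone
    (f := fun u n => M.P s (σ.1 s) u * M.prBounded σ T n u)
    (fun u => fun a b hab => mul_le_mul_right (prBounded_monotone M σ T u hab) _)).symm

lemma prReach_succ_eq_one {s u : S} (hs : s ∉ T) (h1 : M.prReach σ T s = 1)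
    (hP : M.P s (σ.1 s) u ≠ 0) : M.prReach σ T u = 1 := by
  by_contra hne
  have hu : M.prReach σ T u < 1 := lt_of_le_of_ne (prReach_le_one M σ T u) hne
  have hlt : M.P s (σ.1 s) u * M.prReach σ T u < M.P s (σ.1 s) u := by
    calc M.P s (σ.1 s) u * M.prReach σ T u < M.P s (σ.1 s) u * 1 := by
          refine ENNReal.mul_lt_mul_right ?_ ?_ hu
          · exact hP
          · exact ne_top_of_le_ne_top ENNReal.one_ne_top (P_le_one M σ s u)
      _ = M.P s (σ.1 s) u := mul_one _
  have hrest : (∑ v ∈ Finset.univ.erase u, M.P s (σ.1 s) v * M.prReach σ T v)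
      ≤ ∑ v ∈ Finset.univ.erase u, M.P s (σ.1 s) v := by
    refine Finset.sum_le_sum fun v _ => ?_
    calc M.P s (σ.1 s) v * M.prReach σ T v ≤ M.P s (σ.1 s) v * 1 :=
          mul_le_mul_right (prReach_le_one M σ T v) _
      _ = _ := mul_one _
  have hresttop : (∑ v ∈ Finset.univ.erase u, M.P s (σ.1 s) v) ≠ ⊤ := by
    refine ne_top_of_le_ne_top ENNReal.one_ne_top ?_
    rw [← row_sum M σ s]
    exact Finset.sum_le_sum_of_subset (Finset.erase_subset _ _)
  have : (∑ v : S, M.P s (σ.1 s) v * M.prReach σ T v) < 1 := by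
    rw [← Finset.add_sum_erase _ _ (Finset.mem_univ u)]
    calc M.P s (σ.1 s) u * M.prReach σ T u
          + ∑ v ∈ Finset.univ.erase u, M.P s (σ.1 s) v * M.prReach σ T v
        ≤ M.P s (σ.1 s) u * M.prReach σ T u + ∑ v ∈ Finset.univ.erase u, M.P s (σ.1 s) v :=
          add_le_add_right hrest _
      _ < M.P s (σ.1 s) u + ∑ v ∈ Finset.univ.erase u, M.P s (σ.1 s) v :=
          ENNReal.add_lt_add_right hresttop hlt
      _ = ∑ v : S, M.P s (σ.1 s) v := (Finset.add_sum_erase _ _ (Finset.mem_univ u))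
      _ = 1 := row_sum M σ s
  rw [← prReach_fix M σ T hs, h1] at this
  exact lt_irrefl _ this

/-- `n`-step transition probabilities killed at `T`. -/
def rpow : ℕ → S → S → ℝ≥0∞
  | 0 => fun s u => if u = s then 1 else 0
  | n + 1 => fun s u =>
      ∑ v : S, (if s ∈ T then 0 else M.P s (σ.1 s) v) * rpow n v u

lemma rpow_zero (s u : S) : rpow M σ T 0 s u = if u = s then 1 else 0 := rfl

lemma rpow_succ (n : ℕ) (s u : S) :
    rpow M σ T (n+1) s u = ∑ v : S, (if s ∈ T then 0 else M.P s (σ.1 s) v) * rpow M σ T n v u :=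
  rfl

lemma rpow_succ_of_not_mem {s : S} (hs : s ∉ T) (n : ℕ) (u : S) :
    rpow M σ T (n+1) s u = ∑ v : S, M.P s (σ.1 s) v * rpow M σ T n v u := by
  simp [rpow_succ, if_neg hs]

lemma rpow_succ_of_mem {s : S} (hs : s ∈ T) (n : ℕ) (u : S) :
    rpow M σ T (n+1) s u = 0 := by
  simp [rpow_succ, if_pos hs]

lemma rpow_self (s : S) : rpow M σ T 0 s s = 1 := by simp [rpow_zero]

lemma rpow_succ_ne_zero {n : ℕ} {s u : S} (h : rpow M σ T (n+1) s u ≠ 0) :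
    s ∉ T ∧ ∃ v, M.P s (σ.1 s) v ≠ 0 ∧ rpow M σ T n v u ≠ 0 := by
  by_cases hs : s ∈ T
  · exact absurd (rpow_succ_of_mem M σ T hs n u) h
  · refine ⟨hs, ?_⟩
    rw [rpow_succ_of_not_mem M σ T hs] at h
    obtain ⟨v, -, hv⟩ := Finset.exists_ne_zero_of_sum_ne_zero h
    exact ⟨v, by
      constructor
      · intro h0; rw [h0] at hv; simp at hv
      · intro h0; rw [h0] at hv; simp at hv⟩

lemma rpow_add (n m : ℕ) (s u : S) :
    rpow M σ T (n + m) s u = ∑ v : S, rpow M σ T n s v * rpow M σ T m v u := by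
  induction n generalizing s with
  | zero =>
    simp only [Nat.zero_add, rpow_zero]
    rw [Finset.sum_eq_single s]
    · simp
    · intro v _ hvs; simp [if_neg (by exact fun h => hvs (h ▸ rfl) : ¬ v = s)]
    · intro h; exact absurd (Finset.mem_univ s) h
  | succ n ih =>
    have hnm : n + 1 + m = (n + m) + 1 := by omega
    calc rpow M σ T (n + 1 + m) s u
        = ∑ v : S, (if s ∈ T then 0 else M.P s (σ.1 s) v) * rpow M σ T (n + m) v u := by
          rw [hnm, rpow_succ]
      _ = ∑ v : S, (if s ∈ T then 0 else M.P s (σ.1 s) v)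
            * ∑ w : S, rpow M σ T n v w * rpow M σ T m w u := by
          simp_rw [ih]
      _ = ∑ v : S, ∑ w : S, (if s ∈ T then 0 else M.P s (σ.1 s) v)
            * rpow M σ T n v w * rpow M σ T m w u := by
          simp_rw [Finset.mul_sum, mul_assoc]
      _ = ∑ w : S, ∑ v : S, (if s ∈ T then 0 else M.P s (σ.1 s) v)
            * rpow M σ T n v w * rpow M σ T m w u := Finset.sum_comm
      _ = ∑ w : S, (∑ v : S, (if s ∈ T then 0 else M.P s (σ.1 s) v)
            * rpow M σ T n v w) * rpow M σ T m w u := by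
          simp_rw [Finset.sum_mul]
      _ = ∑ w : S, rpow M σ T (n+1) s w * rpow M σ T m w u := by
          simp_rw [rpow_succ]

lemma rpow_trans {n m : ℕ} {s v u : S} (h1 : rpow M σ T n s v ≠ 0)
    (h2 : rpow M σ T m v u ≠ 0) : rpow M σ T (n + m) s u ≠ 0 := by
  rw [rpow_add]
  intro h0
  rw [Finset.sum_eq_zero_iff] at h0
  exact (mul_ne_zero h1 h2) (h0 v (Finset.mem_univ v))

/-- Probability mass of avoiding `T` for `n` steps. -/
def qmass (n : ℕ) (s : S) : ℝ≥0∞ :=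
  ∑ u ∈ Finset.univ.filter (fun u => u ∉ T), rpow M σ T n s u

lemma qmass_zero_of_mem {s : S} (hs : s ∈ T) : qmass M σ T 0 s = 0 := by
  rw [qmass, Finset.sum_eq_zero]
  intro u hu
  rw [Finset.mem_filter] at hu
  rw [rpow_zero, if_neg]
  intro h; exact hu.2 (h ▸ hs)

lemma qmass_zero_of_not_mem {s : S} (hs : s ∉ T) : qmass M σ T 0 s = 1 := by
  rw [qmass, Finset.sum_eq_single s]
  · simp [rpow_zero]
  · intro v hv hvs
    rw [rpow_zero, if_neg (by exact fun h => hvs h)]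
  · intro h
    exact absurd (Finset.mem_filter.2 ⟨Finset.mem_univ s, hs⟩) h

lemma qmass_succ (n : ℕ) (s : S) :
    qmass M σ T (n+1) s = ∑ v : S, (if s ∈ T then 0 else M.P s (σ.1 s) v) * qmass M σ T n v := by
  rw [qmass]
  simp only [rpow_succ]
  rw [Finset.sum_comm]
  simp only [← Finset.mul_sum]
  rfl

lemma qmass_of_mem {s : S} (hs : s ∈ T) (n : ℕ) : qmass M σ T n s = 0 := by
  cases n with
  | zero => exact qmass_zero_of_mem M σ T hs
  | succ n => rw [qmass_succ]; simp [if_pos hs]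

lemma prBounded_add_qmass (n : ℕ) : ∀ s, M.prBounded σ T n s + qmass M σ T n s = 1 := by
  induction n with
  | zero =>
    intro s
    by_cases hs : s ∈ T
    · simp [prBounded, hs, qmass_zero_of_mem M σ T hs]
    · simp [prBounded, hs, qmass_zero_of_not_mem M σ T hs]
  | succ n ih =>
    intro s
    by_cases hs : s ∈ T
    · simp [prBounded, hs, qmass_of_mem M σ T hs]
    · rw [qmass_succ]
      simp only [prBounded, if_neg hs]
      rw [← Finset.sum_add_distrib]
      have hc : ∀ v ∈ Finset.univ (α := S), M.P s (σ.1 s) v * M.prBounded σ T n v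
          + M.P s (σ.1 s) v * qmass M σ T n v = M.P s (σ.1 s) v := by
        intro v _; rw [← mul_add, ih v, mul_one]
      rw [Finset.sum_congr rfl hc, row_sum M σ s]

lemma qmass_le_one (n : ℕ) (s : S) : qmass M σ T n s ≤ 1 := by
  rw [← prBounded_add_qmass M σ T n s]
  exact le_add_self

lemma qmass_eq_one_sub (n : ℕ) (s : S) : qmass M σ T n s = 1 - M.prBounded σ T n s := by
  refine ENNReal.eq_sub_of_add_eq
    (ne_top_of_le_ne_top ENNReal.one_ne_top (prBounded_le_one M σ T n s)) ?_
  rw [add_comm]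
  exact prBounded_add_qmass M σ T n s

lemma prBounded_eq_one_sub (n : ℕ) (s : S) : M.prBounded σ T n s = 1 - qmass M σ T n s :=
  ENNReal.eq_sub_of_add_eq
    (ne_top_of_le_ne_top ENNReal.one_ne_top (qmass_le_one M σ T n s))
    (prBounded_add_qmass M σ T n s)

lemma prReach_rpow_eq_one : ∀ n s u, M.prReach σ T s = 1 →
    rpow M σ T n s u ≠ 0 → M.prReach σ T u = 1 := by
  intro n
  induction n with
  | zero =>
    intro s u hr h
    rw [rpow_zero] at h
    have hus : u = s := by
      by_contra hne; rw [if_neg hne] at h; exact h rfl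
    rwa [hus]
  | succ n ih =>
    intro s u hr h
    obtain ⟨hs, v, hv, hrec⟩ := rpow_succ_ne_zero M σ T h
    exact ih v u (prReach_succ_eq_one M σ T hs hr hv) hrec

lemma unroll (x rew : S → ℝ≥0∞) (hxT : ∀ s ∈ T, x s = 0)
    (hx : ∀ u, u ∉ T → x u ≠ ⊤ → x u ≤ rew u + ∑ v : S, M.P u (σ.1 u) v * x v) :
    ∀ n s, (∀ k u, rpow M σ T k s u ≠ 0 → x u ≠ ⊤) →
      x s ≤ M.erBounded σ T rew n s + ∑ u : S, rpow M σ T n s u * x u := by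
  intro n
  induction n with
  | zero =>
    intro s _
    have h0 : (∑ u : S, rpow M σ T 0 s u * x u) = x s := by
      rw [Finset.sum_eq_single s]
      · rw [rpow_self, one_mul]
      · intro v _ hvs
        rw [rpow_zero, if_neg (by exact fun h => hvs h), zero_mul]
      · intro h; exact absurd (Finset.mem_univ s) h
    rw [h0]
    simp [erBounded]
  | succ n ih =>
    intro s hsafe
    by_cases hs : s ∈ T
    · rw [hxT s hs]; exact zero_le
    · have hxs : x s ≠ ⊤ := hsafe 0 s (by rw [rpow_self]; exact one_ne_zero)
      have step : ∀ v, M.P s (σ.1 s) v ≠ 0 → (∀ k u, rpow M σ T k v u ≠ 0 → x u ≠ ⊤) := by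
        intro v hv k u hk
        refine hsafe (k+1) u ?_
        rw [rpow_succ_of_not_mem M σ T hs]
        intro h0
        rw [Finset.sum_eq_zero_iff] at h0
        exact mul_ne_zero hv hk (h0 v (Finset.mem_univ v))
      have h2 : ∀ v ∈ Finset.univ (α := S), M.P s (σ.1 s) v * x v
          ≤ M.P s (σ.1 s) v * (M.erBounded σ T rew n v + ∑ u : S, rpow M σ T n v u * x u) := by
        intro v _
        by_cases hv : M.P s (σ.1 s) v = 0
        · simp [hv]
        · exact mul_le_mul_right (ih v (step v hv)) _
      have hsplit : (∑ v : S, M.P s (σ.1 s) v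
            * (M.erBounded σ T rew n v + ∑ u : S, rpow M σ T n v u * x u))
          = (∑ v : S, M.P s (σ.1 s) v * M.erBounded σ T rew n v)
            + ∑ u : S, rpow M σ T (n+1) s u * x u := by
        simp_rw [mul_add]
        rw [Finset.sum_add_distrib]
        congr 1
        simp_rw [Finset.mul_sum, ← mul_assoc]
        rw [Finset.sum_comm]
        simp_rw [← Finset.sum_mul]
        refine Finset.sum_congr rfl fun u _ => ?_
        rw [rpow_succ_of_not_mem M σ T hs]
      have herB : M.erBounded σ T rew (n+1) s
          = rew s + ∑ v : S, M.P s (σ.1 s) v * M.erBounded σ T rew n v := by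
        simp [erBounded, if_neg hs]
      calc x s ≤ rew s + ∑ v : S, M.P s (σ.1 s) v * x v := hx s hs hxs
        _ ≤ rew s + ∑ v : S, M.P s (σ.1 s) v
              * (M.erBounded σ T rew n v + ∑ u : S, rpow M σ T n v u * x u) :=
            add_le_add_right (Finset.sum_le_sum h2) _
        _ = M.erBounded σ T rew (n+1) s + ∑ u : S, rpow M σ T (n+1) s u * x u := by
            rw [hsplit, herB, add_assoc]

lemma key (x rew : S → ℝ≥0∞) (hxT : ∀ s ∈ T, x s = 0)
    (hx : ∀ u, u ∉ T → x u ≠ ⊤ → x u ≤ rew u + ∑ v : S, M.P u (σ.1 u) v * x v)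
    (s : S) (hr : M.prReach σ T s = 1)
    (hsafe : ∀ k u, rpow M σ T k s u ≠ 0 → x u ≠ ⊤) :
    x s ≤ ⨆ n, M.erBounded σ T rew n s := by
  set c : ℝ≥0∞ := ∑ u : S, (if x u = ⊤ then 0 else x u) with hc
  have hcne : c ≠ ⊤ := by
    rw [hc]
    refine (ENNReal.sum_lt_top.2 fun u _ => ?_).ne
    split_ifs with h
    · simp
    · exact lt_top_iff_ne_top.2 h
  have hxle : ∀ u, x u ≠ ⊤ → x u ≤ c := by
    intro u hu
    have hs1 : (if x u = ⊤ then 0 else x u) ≤ ∑ u : S, (if x u = ⊤ then 0 else x u) :=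
      Finset.single_le_sum (f := fun u => if x u = ⊤ then 0 else x u)
        (fun _ _ => zero_le) (Finset.mem_univ u)
    rw [← hc] at hs1
    calc x u = (if x u = ⊤ then 0 else x u) := (if_neg hu).symm
      _ ≤ c := hs1
  have hbound : ∀ n, x s ≤ (⨆ m, M.erBounded σ T rew m s) + qmass M σ T n s * c := by
    intro n
    have h1 := unroll M σ T x rew hxT hx n s hsafe
    have htail : (∑ u : S, rpow M σ T n s u * x u) ≤ qmass M σ T n s * c := by
      rw [qmass, Finset.sum_mul]
      rw [← Finset.sum_filter_add_sum_filter_not Finset.univ (fun u => u ∉ T)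
        (fun u => rpow M σ T n s u * x u)]
      have hT0 : (∑ u ∈ Finset.univ.filter (fun u => ¬ u ∉ T), rpow M σ T n s u * x u) = 0 := by
        refine Finset.sum_eq_zero fun u hu => ?_
        rw [Finset.mem_filter] at hu
        rw [hxT u (not_not.1 hu.2), mul_zero]
      rw [hT0, add_zero]
      refine Finset.sum_le_sum fun u hu => ?_
      by_cases h0 : rpow M σ T n s u = 0
      · simp [h0]
      · exact mul_le_mul_right (hxle u (hsafe n u h0)) _
    calc x s ≤ M.erBounded σ T rew n s + ∑ u : S, rpow M σ T n s u * x u := h1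
      _ ≤ (⨆ m, M.erBounded σ T rew m s) + qmass M σ T n s * c :=
          add_le_add (le_iSup (fun m => M.erBounded σ T rew m s) n) htail
  have hq0 : Filter.Tendsto (fun n => qmass M σ T n s) Filter.atTop (nhds 0) := by
    have hanti : Antitone (fun n => qmass M σ T n s) := by
      intro a b hab
      show qmass M σ T b s ≤ qmass M σ T a s
      rw [qmass_eq_one_sub, qmass_eq_one_sub]
      exact tsub_le_tsub_left (prBounded_monotone M σ T s hab) 1
    have hiInf : (⨅ n, qmass M σ T n s) = 0 := by
      have h2 : (⨅ n, qmass M σ T n s) = 1 - ⨆ n, M.prBounded σ T n s := by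
        simp_rw [qmass_eq_one_sub]
        exact (ENNReal.sub_iSup ENNReal.one_ne_top).symm
      rw [h2, show (⨆ n, M.prBounded σ T n s) = 1 from hr]
      simp
    rw [← hiInf]
    exact tendsto_atTop_iInf hanti
  have hlim : Filter.Tendsto (fun n => (⨆ m, M.erBounded σ T rew m s) + qmass M σ T n s * c)
      Filter.atTop (nhds ((⨆ m, M.erBounded σ T rew m s) + 0 * c)) :=
    Filter.Tendsto.const_add _ (ENNReal.Tendsto.mul_const hq0 (Or.inr hcne))
  have hfin := ge_of_tendsto' hlim hbound
  simpa using hfin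

lemma prReach_eq_one_of_no_zero (u : S)
    (h : ∀ w, (∃ k, rpow M σ T k u w ≠ 0) → M.prReach σ T w ≠ 0) :
    M.prReach σ T u = 1 := by
  set R : Finset S := Finset.univ.filter (fun w => ∃ k, rpow M σ T k u w ≠ 0) with hR
  have huR : u ∈ R := by
    rw [hR, Finset.mem_filter]
    exact ⟨Finset.mem_univ u, ⟨0, by rw [rpow_self]; exact one_ne_zero⟩⟩
  have hex : ∀ w ∈ R, ∃ n, M.prBounded σ T n w ≠ 0 := by
    intro w hw
    rw [hR, Finset.mem_filter] at hw
    by_contra hno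
    push_neg at hno
    have h0 : M.prReach σ T w = 0 := by
      have : (⨆ n, M.prBounded σ T n w) = 0 := by simp [hno]
      exact this
    exact h w hw.2 h0
  choose nf hnf using hex
  set N := R.attach.sup (fun w => nf w.1 w.2) with hN
  have hprBN : ∀ w ∈ R, M.prBounded σ T N w ≠ 0 := by
    intro w hw
    have hle : nf w hw ≤ N :=
      Finset.le_sup (f := fun w : {x // x ∈ R} => nf w.1 w.2) (Finset.mem_attach R ⟨w, hw⟩)
    intro h0
    have hmono : M.prBounded σ T (nf w hw) w ≤ M.prBounded σ T N w :=
      prBounded_monotone M σ T w hle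
    rw [h0] at hmono
    exact hnf w hw (le_antisymm hmono (zero_le))
  have hRne : R.Nonempty := ⟨u, huR⟩
  set δ := R.inf' hRne (fun w => M.prBounded σ T N w) with hδ
  have hδ0 : δ ≠ 0 := by
    have hpos : 0 < R.inf' hRne (fun w => M.prBounded σ T N w) := by
      rw [Finset.lt_inf'_iff]
      intro w hw; exact pos_iff_ne_zero.2 (hprBN w hw)
    exact hpos.ne'
  have hδle : ∀ w ∈ R, δ ≤ M.prBounded σ T N w := fun w hw => Finset.inf'_le _ hw
  have hclos : ∀ w v k, w ∈ R → rpow M σ T k w v ≠ 0 → v ∈ R := by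
    intro w v k hw hk
    rw [hR, Finset.mem_filter] at hw ⊢
    obtain ⟨-, k0, hk0⟩ := hw
    exact ⟨Finset.mem_univ v, k0 + k, rpow_trans M σ T hk0 hk⟩
  have hstep : ∀ k, qmass M σ T (k + N) u ≤ (1 - δ) * qmass M σ T k u := by
    intro k
    have hsplit : qmass M σ T (k + N) u = ∑ v : S, rpow M σ T k u v * qmass M σ T N v := by
      rw [qmass]
      simp_rw [rpow_add M σ T k N]
      rw [Finset.sum_comm]
      simp_rw [← Finset.mul_sum]
      rfl
    rw [hsplit, qmass, Finset.mul_sum]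
    rw [← Finset.sum_filter_add_sum_filter_not Finset.univ (fun v => v ∉ T)
        (fun v => rpow M σ T k u v * qmass M σ T N v)]
    have hT0 : (∑ v ∈ Finset.univ.filter (fun v => ¬ v ∉ T),
        rpow M σ T k u v * qmass M σ T N v) = 0 :=
      Finset.sum_eq_zero fun v hv => by
        rw [Finset.mem_filter] at hv
        rw [qmass_of_mem M σ T (not_not.1 hv.2), mul_zero]
    rw [hT0, add_zero]
    refine Finset.sum_le_sum fun v hv => ?_
    by_cases h0 : rpow M σ T k u v = 0
    · simp [h0]
    · have hvR : v ∈ R := hclos u v k huR h0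
      have hqv : qmass M σ T N v ≤ 1 - δ := by
        rw [qmass_eq_one_sub]
        exact tsub_le_tsub_left (hδle v hvR) 1
      calc rpow M σ T k u v * qmass M σ T N v
          ≤ rpow M σ T k u v * (1 - δ) := mul_le_mul_right hqv _
        _ = (1 - δ) * rpow M σ T k u v := mul_comm _ _
  have hgeo : ∀ m, qmass M σ T (m * N) u ≤ (1 - δ) ^ m := by
    intro m
    induction m with
    | zero => simpa using qmass_le_one M σ T 0 u
    | succ m ih =>
      have hmn : (m + 1) * N = m * N + N := by ring
      rw [hmn, pow_succ]
      calc qmass M σ T (m * N + N) u ≤ (1 - δ) * qmass M σ T (m * N) u := hstep (m * N)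
        _ ≤ (1 - δ) * (1 - δ) ^ m := mul_le_mul_right ih _
        _ = (1 - δ) ^ m * (1 - δ) := mul_comm _ _
  have hub : ∀ m, 1 - (1 - δ) ^ m ≤ M.prReach σ T u := by
    intro m
    calc 1 - (1 - δ) ^ m ≤ 1 - qmass M σ T (m * N) u := tsub_le_tsub_left (hgeo m) 1
      _ = M.prBounded σ T (m * N) u := (prBounded_eq_one_sub M σ T _ u).symm
      _ ≤ M.prReach σ T u := prBounded_le_prReach M σ T _ u
  have hlt : (1 - δ) < 1 := ENNReal.sub_lt_self ENNReal.one_ne_top one_ne_zero hδ0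
  have hpow : Filter.Tendsto (fun m => (1 - δ) ^ m) Filter.atTop (nhds 0) :=
    ENNReal.tendsto_pow_atTop_nhds_zero_of_lt_one hlt
  have h1m : Filter.Tendsto (fun m => 1 - (1 - δ) ^ m) Filter.atTop (nhds (1 - 0)) :=
    ENNReal.Tendsto.sub tendsto_const_nhds hpow (Or.inl ENNReal.one_ne_top)
  rw [show (1:ℝ≥0∞) - 0 = 1 by simp] at h1m
  exact le_antisymm (prReach_le_one M σ T u) (le_of_tendsto' h1m hub)

end Aux

section Attr

variable (M : CertMDP S A) (T : Set S)

/-- States from which some strategy avoids `T` almost surely. -/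
def zeroSet : Set S := {v | ∃ τ : M.Strat, M.prReach τ T v = 0}

lemma zeroSet_not_mem_T {v : S} (hv : v ∈ zeroSet M T) : v ∉ T := by
  obtain ⟨τ, hτ⟩ := hv
  intro hvT
  rw [prReach_of_mem M τ T hvT] at hτ
  exact one_ne_zero hτ

lemma zeroSet_step {v : S} (hv : v ∈ zeroSet M T) :
    ∃ a, a ∈ M.enabled v ∧ ∀ u, M.P v a u ≠ 0 → u ∈ zeroSet M T := by
  obtain ⟨τ, hτ⟩ := hv
  refine ⟨τ.1 v, τ.2 v, fun u hu => ?_⟩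
  have hfix := prReach_fix M τ T (zeroSet_not_mem_T M T ⟨τ, hτ⟩)
  rw [hτ] at hfix
  have hz := (Finset.sum_eq_zero_iff.1 hfix.symm) u (Finset.mem_univ u)
  rcases mul_eq_zero.1 hz with h | h
  · exact absurd h hu
  · exact ⟨τ, h⟩

/-- Bounded-rank positive attractor of `zeroSet`. -/
def attrN : ℕ → Set S
  | 0 => zeroSet M T
  | n + 1 => attrN n ∪ {v | v ∉ T ∧ ∃ a ∈ M.enabled v, ∃ u, M.P v a u ≠ 0 ∧ u ∈ attrN n}

/-- Positive attractor of `zeroSet`. -/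
def attr : Set S := ⋃ n, attrN M T n

lemma attrN_subset_attr (n : ℕ) : attrN M T n ⊆ attr M T := Set.subset_iUnion (attrN M T) n

lemma attr_of_step {v u : S} {a : A} (hvT : v ∉ T) (ha : a ∈ M.enabled v)
    (hP : M.P v a u ≠ 0) (hu : u ∈ attr M T) : v ∈ attr M T := by
  rw [attr, Set.mem_iUnion] at hu
  obtain ⟨n, hun⟩ := hu
  exact attrN_subset_attr M T (n+1) (Or.inr ⟨hvT, a, ha, u, hP, hun⟩)

/-- Rank in the attractor. -/
noncomputable def rk (v : S) : ℕ := sInf {n | v ∈ attrN M T n}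

lemma rk_spec {v : S} (hv : v ∈ attr M T) : v ∈ attrN M T (rk M T v) := by
  rw [attr, Set.mem_iUnion] at hv
  exact Nat.sInf_mem hv

lemma rk_le {v : S} {n : ℕ} (hv : v ∈ attrN M T n) : rk M T v ≤ n := Nat.sInf_le hv

lemma attr_step {v : S} (hv : v ∈ attr M T) (h0 : v ∉ zeroSet M T) :
    v ∉ T ∧ ∃ a, a ∈ M.enabled v
      ∧ ∃ u, M.P v a u ≠ 0 ∧ u ∈ attr M T ∧ rk M T u < rk M T v := by
  have hmem := rk_spec M T hv
  cases hk : rk M T v with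
  | zero =>
    rw [hk] at hmem
    exact absurd hmem h0
  | succ j =>
    rw [hk] at hmem
    rcases hmem with hj | ⟨hvT, a, ha, u, hP, hu⟩
    · have := rk_le M T hj; omega
    · refine ⟨hvT, a, ha, u, hP, attrN_subset_attr M T j hu, ?_⟩
      have := rk_le M T hu; omega

/-- Escape strategy witnessing that attractor states do not reach `T` almost surely. -/
noncomputable def escFun : S → A := fun v =>
  if h0 : v ∈ zeroSet M T then Classical.choose (zeroSet_step M T h0)
  else if h1 : v ∈ attr M T then Classical.choose ((attr_step M T h1 h0).2)
  else Classical.choose (M.exists_enabled v)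

lemma escFun_enabled (v : S) : escFun M T v ∈ M.enabled v := by
  rw [escFun]
  split_ifs with h0 h1
  · exact (Classical.choose_spec (zeroSet_step M T h0)).1
  · exact (Classical.choose_spec ((attr_step M T h1 h0).2)).1
  · exact Classical.choose_spec (M.exists_enabled v)

noncomputable def esc : M.Strat := ⟨escFun M T, escFun_enabled M T⟩

lemma escFun_zero {v : S} (h0 : v ∈ zeroSet M T) :
    ∀ u, M.P v (escFun M T v) u ≠ 0 → u ∈ zeroSet M T := by
  intro u hu
  rw [escFun, dif_pos h0] at hu
  exact (Classical.choose_spec (zeroSet_step M T h0)).2 u hu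

lemma escFun_attr {v : S} (h1 : v ∈ attr M T) (h0 : v ∉ zeroSet M T) :
    ∃ u, M.P v (escFun M T v) u ≠ 0 ∧ u ∈ attr M T ∧ rk M T u < rk M T v := by
  have hspec := Classical.choose_spec ((attr_step M T h1 h0).2)
  rw [escFun, dif_neg h0, dif_pos h1]
  exact hspec.2

lemma esc_qmass_zeroSet : ∀ n, ∀ v ∈ zeroSet M T, qmass M (esc M T) T n v = 1 := by
  intro n
  induction n with
  | zero => intro v hv; exact qmass_zero_of_not_mem M _ T (zeroSet_not_mem_T M T hv)
  | succ n ih =>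
    intro v hv
    have hvT : v ∉ T := zeroSet_not_mem_T M T hv
    rw [qmass_succ]
    simp only [if_neg hvT]
    have hcong : ∀ u ∈ Finset.univ (α := S),
        M.P v ((esc M T).1 v) u * qmass M (esc M T) T n u = M.P v ((esc M T).1 v) u := by
      intro u _
      by_cases hP : M.P v ((esc M T).1 v) u = 0
      · rw [hP, zero_mul]
      · rw [ih u (escFun_zero M T hv u hP), mul_one]
    rw [Finset.sum_congr rfl hcong, row_sum]

lemma esc_qmass_pos : ∀ k, ∀ v ∈ attr M T, rk M T v ≤ k →
    ∃ ρ, ρ ≠ 0 ∧ ∀ n, ρ ≤ qmass M (esc M T) T n v := by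
  intro k
  induction k with
  | zero =>
    intro v hv hrk
    have h0 : v ∈ zeroSet M T := by
      have hs := rk_spec M T hv
      rw [Nat.le_zero.1 hrk] at hs
      exact hs
    exact ⟨1, one_ne_zero, fun n => (esc_qmass_zeroSet M T n v h0).ge⟩
  | succ k ih =>
    intro v hv hrk
    by_cases h0 : v ∈ zeroSet M T
    · exact ⟨1, one_ne_zero, fun n => (esc_qmass_zeroSet M T n v h0).ge⟩
    · obtain ⟨u, hP, hu, hlt⟩ := escFun_attr M T hv h0
      have hvT : v ∉ T := (attr_step M T hv h0).1
      obtain ⟨ρ, hρ0, hρ⟩ := ih u hu (by omega)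
      have hρ1 : ρ ≤ 1 := le_trans (hρ 0) (qmass_le_one M _ T 0 u)
      refine ⟨M.P v (escFun M T v) u * ρ, mul_ne_zero hP hρ0, fun n => ?_⟩
      cases n with
      | zero =>
        rw [qmass_zero_of_not_mem M _ T hvT]
        calc M.P v (escFun M T v) u * ρ ≤ 1 * 1 :=
              mul_le_mul' (P_le_one M (esc M T) v u) hρ1
          _ = 1 := one_mul 1
      | succ n =>
        rw [qmass_succ]
        simp only [if_neg hvT]
        calc M.P v (escFun M T v) u * ρ
            ≤ M.P v (escFun M T v) u * qmass M (esc M T) T n u :=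
              mul_le_mul_right (hρ n) _
          _ ≤ ∑ w : S, M.P v ((esc M T).1 v) w * qmass M (esc M T) T n w :=
              Finset.single_le_sum
                (f := fun w => M.P v ((esc M T).1 v) w * qmass M (esc M T) T n w)
                (fun _ _ => zero_le) (Finset.mem_univ u)

lemma attr_prReach_lt {v : S} (hv : v ∈ attr M T) : M.prReach (esc M T) T v < 1 := by
  obtain ⟨ρ, hρ0, hρ⟩ := esc_qmass_pos M T (rk M T v) v hv le_rfl
  have hub : ∀ n, M.prBounded (esc M T) T n v ≤ 1 - ρ := by
    intro n
    have hq := prBounded_add_qmass M (esc M T) T n v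
    have hle : M.prBounded (esc M T) T n v + ρ ≤ 1 := by
      calc M.prBounded (esc M T) T n v + ρ
          ≤ M.prBounded (esc M T) T n v + qmass M (esc M T) T n v := add_le_add_right (hρ n) _
        _ = 1 := hq
    exact ENNReal.le_sub_of_add_le_right
      (ne_top_of_le_ne_top ENNReal.one_ne_top (le_trans (hρ 0) (qmass_le_one M _ T 0 v))) hle
  calc M.prReach (esc M T) T v ≤ 1 - ρ := iSup_le hub
    _ < 1 := ENNReal.sub_lt_self ENNReal.one_ne_top one_ne_zero hρ0

lemma rpow_not_attr (σ : M.Strat) : ∀ n s u, s ∉ attr M T →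
    rpow M σ T n s u ≠ 0 → u ∉ attr M T := by
  intro n
  induction n with
  | zero =>
    intro s u hs h
    rw [rpow_zero] at h
    have hus : u = s := by by_contra hne; rw [if_neg hne] at h; exact h rfl
    rwa [hus]
  | succ n ih =>
    intro s u hs h
    obtain ⟨hsT, v, hv, hrec⟩ := rpow_succ_ne_zero M σ T h
    have hvattr : v ∉ attr M T := fun hva => hs (attr_of_step M T hsT (σ.2 s) hv hva)
    exact ih v u hvattr hrec

lemma not_attr_prReach_one {s : S} (hs : s ∉ attr M T) (τ : M.Strat) :
    M.prReach τ T s = 1 := by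
  apply prReach_eq_one_of_no_zero
  rintro w ⟨k, hk⟩ h0
  exact rpow_not_attr M T τ k s w hs hk (attrN_subset_attr M T 0 ⟨τ, h0⟩)

noncomputable def defaultStrat : M.Strat :=
  ⟨fun s => Classical.choose (M.exists_enabled s),
   fun s => Classical.choose_spec (M.exists_enabled s)⟩

lemma optPr_min_eq_one_iff (s : S) :
    M.optPr ODir.dmin T s = 1 ↔ ∀ τ : M.Strat, M.prReach τ T s = 1 := by
  constructor
  · intro h τ
    have hle : M.optPr ODir.dmin T s ≤ M.prReach τ T s := sInf_le ⟨τ, rfl⟩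
    rw [h] at hle
    exact le_antisymm (prReach_le_one M τ T s) hle
  · intro h
    refine le_antisymm ?_ ?_
    · have hmem : M.prReach (defaultStrat M) T s
          ∈ {p | ∃ σ : M.Strat, p = M.prReach σ T s} := ⟨_, rfl⟩
      exact sInf_le_of_le hmem (by rw [h])
    · exact le_sInf (by rintro p ⟨τ, rfl⟩; rw [h τ])

lemma optPr_max_eq_one {s : S} (τ : M.Strat) (h : M.prReach τ T s = 1) :
    M.optPr ODir.dmax T s = 1 :=
  le_antisymm (sSup_le (by rintro p ⟨σ', rfl⟩; exact prReach_le_one M σ' T s))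
    (h ▸ le_sSup ⟨τ, rfl⟩)

lemma exists_greedy (x : S → ℝ≥0∞) : ∃ σ : M.Strat, ∀ s : S,
    sSup ((fun a => ∑ v : S, M.P s a v * x v) '' M.enabled s)
      ≤ ∑ v : S, M.P s (σ.1 s) v * x v := by
  have hstep : ∀ s : S, ∃ a, a ∈ M.enabled s ∧ ∀ b ∈ M.enabled s,
      (∑ v : S, M.P s b v * x v) ≤ ∑ v : S, M.P s a v * x v := by
    intro s
    have hne : (Finset.univ.filter (fun a => a ∈ M.enabled s)).Nonempty := by
      obtain ⟨a, ha⟩ := M.exists_enabled s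
      exact ⟨a, Finset.mem_filter.2 ⟨Finset.mem_univ a, ha⟩⟩
    obtain ⟨a, ha, hmax⟩ :=
      Finset.exists_max_image _ (fun a => ∑ v : S, M.P s a v * x v) hne
    rw [Finset.mem_filter] at ha
    exact ⟨a, ha.2, fun b hb => hmax b (Finset.mem_filter.2 ⟨Finset.mem_univ b, hb⟩)⟩
  choose f hf1 hf2 using hstep
  refine ⟨⟨f, hf1⟩, fun s => ?_⟩
  refine sSup_le ?_
  rintro p ⟨a, ha, rfl⟩
  exact hf2 s a ha

end Attr

end CertMDP
/-- Certificates for lower bounds on optimal expected rewards: if `x ≤ E^opt(x)` and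
`x s < ∞` whenever `Pr^{¬opt}_s(◇T) = 1`, then `x` is a lower bound on the optimal
expected rewards. -/
theorem stmt17 {S A : Type} [Fintype S] [Fintype A] (M : CertMDP S A) (o : ODir) (T : Set S)
    (rew : S → ℝ≥0∞) (hrew : ∀ s, rew s ≠ ⊤) (x : S → ℝ≥0∞)
    (h1 : x ≤ M.bellmanR o T rew x)
    (h2 : ∀ s, M.optPr o.neg T s = 1 → x s < ⊤) :
    ∀ s, x s ≤ M.optER o T rew s := by
  classical
  intro s
  have hxT : ∀ t ∈ T, x t = 0 := by
    intro t ht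
    have h1t := h1 t
    rw [show M.bellmanR o T rew x t = 0 from by simp [CertMDP.bellmanR, if_pos ht]] at h1t
    exact le_antisymm h1t (zero_le)
  cases o with
  | dmin =>
    show x s ≤ sInf {p | ∃ σ : M.Strat, p = M.expRew σ T rew s}
    refine le_sInf ?_
    rintro p ⟨σ, rfl⟩
    rw [CertMDP.expRew]
    split_ifs with hreach
    · refine CertMDP.key M σ T x rew hxT ?_ s hreach ?_
      · intro u huT _
        have h1u := h1 u
        rw [show M.bellmanR ODir.dmin T rew x u
            = rew u + sInf ((fun a => ∑ v : S, M.P u a v * x v) '' M.enabled u) from by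
          simp [CertMDP.bellmanR, if_neg huT, ODir.run]] at h1u
        calc x u ≤ rew u + sInf ((fun a => ∑ v : S, M.P u a v * x v) '' M.enabled u) := h1u
          _ ≤ rew u + ∑ v : S, M.P u (σ.1 u) v * x v :=
              add_le_add_right (sInf_le (Set.mem_image_of_mem _ (σ.2 u))) _
      · intro k u hk
        have hu1 : M.prReach σ T u = 1 :=
          CertMDP.prReach_rpow_eq_one M σ T k s u hreach hk
        exact (h2 u (CertMDP.optPr_max_eq_one M T σ hu1)).ne
    · exact le_top
  | dmax =>
    show x s ≤ sSup {p | ∃ σ : M.Strat, p = M.expRew σ T rew s}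
    by_cases hall : ∀ τ : M.Strat, M.prReach τ T s = 1
    · obtain ⟨σ, hσ⟩ := CertMDP.exists_greedy M x
      have hsx : s ∉ CertMDP.attr M T := by
        intro hs
        have hlt := CertMDP.attr_prReach_lt M T hs
        rw [hall (CertMDP.esc M T)] at hlt
        exact lt_irrefl _ hlt
      have hkey : x s ≤ ⨆ n, M.erBounded σ T rew n s := by
        refine CertMDP.key M σ T x rew hxT ?_ s (hall σ) ?_
        · intro u huT _
          have h1u := h1 u
          rw [show M.bellmanR ODir.dmax T rew x u
              = rew u + sSup ((fun a => ∑ v : S, M.P u a v * x v) '' M.enabled u) from by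
            simp [CertMDP.bellmanR, if_neg huT, ODir.run]] at h1u
          calc x u ≤ rew u + sSup ((fun a => ∑ v : S, M.P u a v * x v) '' M.enabled u) := h1u
            _ ≤ rew u + ∑ v : S, M.P u (σ.1 u) v * x v := add_le_add_right (hσ u) _
        · intro k u hk
          have hu : u ∉ CertMDP.attr M T := CertMDP.rpow_not_attr M T σ k s u hsx hk
          have hopt : M.optPr ODir.dmin T u = 1 :=
            (CertMDP.optPr_min_eq_one_iff M T u).2 (CertMDP.not_attr_prReach_one M T hu)
          exact (h2 u hopt).ne
      calc x s ≤ ⨆ n, M.erBounded σ T rew n s := hkey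
        _ = M.expRew σ T rew s := by rw [CertMDP.expRew, if_pos (hall σ)]
        _ ≤ sSup {p | ∃ σ : M.Strat, p = M.expRew σ T rew s} := le_sSup ⟨σ, rfl⟩
    · push_neg at hall
      obtain ⟨τ, hτ⟩ := hall
      have htop : M.expRew τ T rew s = ⊤ := by rw [CertMDP.expRew, if_neg hτ]
      calc x s ≤ ⊤ := le_top
        _ = M.expRew τ T rew s := htop.symm
        _ ≤ sSup {p | ∃ σ : M.Strat, p = M.expRew σ T rew s} := le_sSup ⟨τ, rfl⟩
end
end

section
/- The modified maximal Bellman operator for expected rewards Ẽ^max, defined by Ẽ^max(x)(s) = E^max(x)(s) if Pr^{min}_s(◇T) > 0 and Ẽ^max(x)(s) = ∞ if Pr^{min}_s(◇T) = 0, satisfies (lfp Ẽ^max)(s) = ExpRew^{max}_s(◇T) for all states s. -/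
open scoped ENNReal
open Classical

noncomputable section

/-- The modified maximal Bellman operator for expected rewards `Ẽ^max`. -/
def CertMDP.modBellmanRMax {S A : Type} [Fintype S] [Fintype A] (M : CertMDP S A) (T : Set S)
    (rew : S → ℝ≥0∞) (x : S → ℝ≥0∞) : S → ℝ≥0∞ :=
  fun s => if M.optPr ODir.dmin T s = 0 then ⊤ else M.bellmanR ODir.dmax T rew x s

open scoped ENNReal
open Classical

noncomputable section

namespace CertMDPAux

open CertMDP

variable {S A : Type} [Fintype S] [Fintype A]

instance (M : CertMDP S A) : Finite M.Strat := by
  unfold CertMDP.Strat; infer_instance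

instance (M : CertMDP S A) : Nonempty M.Strat :=
  ⟨⟨fun s => (M.exists_enabled s).choose, fun s => (M.exists_enabled s).choose_spec⟩⟩

lemma enabled_ne (M : CertMDP S A) (s : S) : (M.enabled s).Nonempty :=
  ⟨(M.exists_enabled s).choose, (M.exists_enabled s).choose_spec⟩

lemma sum_P_le_one (M : CertMDP S A) (s : S) (a : A) : (∑ s' : S, M.P s a s') ≤ 1 := by
  rcases M.sum_P s a with h | h <;> simp [h]

lemma P_le_one (M : CertMDP S A) (s : S) (a : A) (w : S) : M.P s a w ≤ 1 :=
  le_trans (Finset.single_le_sum (fun i _ => zero_le) (Finset.mem_univ w)) (sum_P_le_one M s a)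

lemma P_ne_top (M : CertMDP S A) (s : S) (a : A) (w : S) : M.P s a w ≠ ⊤ :=
  (lt_of_le_of_lt (P_le_one M s a w) ENNReal.one_lt_top).ne

lemma enabled_sum (M : CertMDP S A) {s : S} {a : A} (h : a ∈ M.enabled s) :
    (∑ s' : S, M.P s a s') = 1 := h

variable (M : CertMDP S A) (T : Set S)

lemma prB_T (σ : M.Strat) {s : S} (h : s ∈ T) (n : ℕ) : M.prBounded σ T n s = 1 := by
  cases n <;> simp [CertMDP.prBounded, h]

lemma prB_le_one (σ : M.Strat) : ∀ n s, M.prBounded σ T n s ≤ 1 := by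
  intro n
  induction n with
  | zero => intro s; simp only [CertMDP.prBounded]; split <;> simp
  | succ n ih =>
    intro s
    simp only [CertMDP.prBounded]
    split
    · exact le_rfl
    · calc (∑ s' : S, M.P s (σ.1 s) s' * M.prBounded σ T n s')
          ≤ ∑ s' : S, M.P s (σ.1 s) s' * 1 :=
            Finset.sum_le_sum (fun i _ => mul_le_mul_right (ih i) _)
        _ ≤ 1 := by simpa using sum_P_le_one M s (σ.1 s)

lemma prB_succ_le (σ : M.Strat) : ∀ n s, M.prBounded σ T n s ≤ M.prBounded σ T (n+1) s := by
  intro n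
  induction n with
  | zero =>
    intro s
    simp only [CertMDP.prBounded]
    split <;> simp
  | succ n ih =>
    intro s
    simp only [CertMDP.prBounded]
    split
    · exact le_rfl
    · exact Finset.sum_le_sum (fun i _ => mul_le_mul_right (ih i) _)

lemma prB_mono (σ : M.Strat) (s : S) : Monotone (fun n => M.prBounded σ T n s) :=
  monotone_nat_of_le_succ (fun n => prB_succ_le M T σ n s)

lemma prReach_le_one (σ : M.Strat) (s : S) : M.prReach σ T s ≤ 1 :=
  iSup_le (fun n => prB_le_one M T σ n s)

lemma prReach_T (σ : M.Strat) {s : S} (h : s ∈ T) : M.prReach σ T s = 1 :=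
  le_antisymm (prReach_le_one M T σ s) (le_iSup_of_le 0 (by simp [CertMDP.prBounded, h]))

lemma prReach_ne_top (σ : M.Strat) (s : S) : M.prReach σ T s ≠ ⊤ :=
  (lt_of_le_of_lt (prReach_le_one M T σ s) ENNReal.one_lt_top).ne

lemma optPr_min_le (σ : M.Strat) (s : S) : M.optPr ODir.dmin T s ≤ M.prReach σ T s :=
  sInf_le ⟨σ, rfl⟩

lemma le_optPr_min {c : ℝ≥0∞} {s : S} (h : ∀ σ : M.Strat, c ≤ M.prReach σ T s) :
    c ≤ M.optPr ODir.dmin T s := by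
  apply le_sInf
  rintro p ⟨σ, rfl⟩
  exact h σ

lemma exists_prReach_eq_optPr (s : S) : ∃ σ : M.Strat, M.prReach σ T s = M.optPr ODir.dmin T s := by
  have hset : {p | ∃ σ : M.Strat, p = M.prReach σ T s} = Set.range (fun σ : M.Strat => M.prReach σ T s) := by
    ext p; simp [eq_comm]
  have hne : {p | ∃ σ : M.Strat, p = M.prReach σ T s}.Nonempty := by
    obtain ⟨σ⟩ := (inferInstance : Nonempty M.Strat)
    exact ⟨_, σ, rfl⟩
  have hfin : {p | ∃ σ : M.Strat, p = M.prReach σ T s}.Finite := by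
    rw [hset]; exact Set.finite_range _
  have := Set.Nonempty.csInf_mem hne hfin
  obtain ⟨σ, hσ⟩ := this
  exact ⟨σ, hσ.symm⟩

/-- probability to avoid `T` for `n` steps -/
def avoidP (σ : M.Strat) : ℕ → S → ℝ≥0∞
  | 0, s => if s ∈ T then 0 else 1
  | n+1, s => if s ∈ T then 0 else ∑ s' : S, M.P s (σ.1 s) s' * avoidP σ n s'

lemma avoid_T (σ : M.Strat) {s : S} (h : s ∈ T) (n : ℕ) : avoidP M T σ n s = 0 := by
  cases n <;> simp [avoidP, h]

lemma avoid_le_one (σ : M.Strat) : ∀ n s, avoidP M T σ n s ≤ 1 := by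
  intro n
  induction n with
  | zero => intro s; simp only [avoidP]; split <;> simp
  | succ n ih =>
    intro s
    simp only [avoidP]
    split
    · simp
    · calc (∑ s' : S, M.P s (σ.1 s) s' * avoidP M T σ n s')
          ≤ ∑ s' : S, M.P s (σ.1 s) s' * 1 :=
            Finset.sum_le_sum (fun i _ => mul_le_mul_right (ih i) _)
        _ ≤ 1 := by simpa using sum_P_le_one M s (σ.1 s)

lemma prB_add_avoid (σ : M.Strat) : ∀ n s, M.prBounded σ T n s + avoidP M T σ n s = 1 := by
  intro n
  induction n with
  | zero => intro s; simp only [CertMDP.prBounded, avoidP]; split <;> simp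
  | succ n ih =>
    intro s
    simp only [CertMDP.prBounded, avoidP]
    split
    · simp
    · rw [← Finset.sum_add_distrib]
      calc (∑ s' : S, (M.P s (σ.1 s) s' * M.prBounded σ T n s' + M.P s (σ.1 s) s' * avoidP M T σ n s'))
          = ∑ s' : S, M.P s (σ.1 s) s' := by
            apply Finset.sum_congr rfl
            intro w _
            rw [← mul_add, ih w, mul_one]
        _ = 1 := enabled_sum M (σ.2 s)

lemma avoid_succ_le (σ : M.Strat) : ∀ n s, avoidP M T σ (n+1) s ≤ avoidP M T σ n s := by
  intro n
  induction n with
  | zero =>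
    intro s
    simp only [avoidP]
    split
    · simp
    · calc (∑ s' : S, M.P s (σ.1 s) s' * (if s' ∈ T then 0 else 1))
          ≤ ∑ s' : S, M.P s (σ.1 s) s' * 1 := by
            apply Finset.sum_le_sum; intro i _; apply mul_le_mul_right; split <;> simp
        _ ≤ 1 := by simpa using sum_P_le_one M s (σ.1 s)
  | succ n ih =>
    intro s
    simp only [avoidP]
    split
    · exact le_rfl
    · exact Finset.sum_le_sum (fun i _ => mul_le_mul_right (ih i) _)

lemma avoid_anti (σ : M.Strat) (s : S) : Antitone (fun n => avoidP M T σ n s) :=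
  antitone_nat_of_succ_le (fun n => avoid_succ_le M T σ n s)

lemma avoid_eq_sub (σ : M.Strat) (n : ℕ) (s : S) :
    avoidP M T σ n s = 1 - M.prBounded σ T n s := by
  refine ENNReal.eq_sub_of_add_eq ?_ ?_
  · exact (lt_of_le_of_lt (prB_le_one M T σ n s) ENNReal.one_lt_top).ne
  · rw [add_comm]; exact prB_add_avoid M T σ n s

lemma iInf_avoid (σ : M.Strat) (s : S) :
    ⨅ n, avoidP M T σ n s = 1 - M.prReach σ T s := by
  rw [CertMDP.prReach, ENNReal.sub_iSup ENNReal.one_ne_top]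
  exact iInf_congr (fun n => avoid_eq_sub M T σ n s)

lemma iInf_avoid_eq_zero (σ : M.Strat) {s : S} (h : M.prReach σ T s = 1) :
    ⨅ n, avoidP M T σ n s = 0 := by
  rw [iInf_avoid, h, tsub_self]

lemma iInf_avoid_pos (σ : M.Strat) {s : S} (h : M.prReach σ T s ≠ 1) :
    0 < ⨅ n, avoidP M T σ n s := by
  rw [iInf_avoid]
  exact tsub_pos_of_lt (lt_of_le_of_ne (prReach_le_one M T σ s) h)

lemma prReach_eq_zero (σ : M.Strat) {s : S} (h : ∀ n, avoidP M T σ n s = 1) :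
    M.prReach σ T s = 0 := by
  have hB : ∀ n, M.prBounded σ T n s = 0 := by
    intro n
    have h1 := prB_add_avoid M T σ n s
    rw [h n] at h1
    have := ENNReal.add_sub_cancel_right (a := M.prBounded σ T n s) (b := 1) ENNReal.one_ne_top
    rw [h1] at this
    simpa using this.symm
  simp [CertMDP.prReach, hB]

lemma iInf_avoid_shift (σ : M.Strat) (s : S) :
    ⨅ n, avoidP M T σ (n+1) s = ⨅ n, avoidP M T σ n s := by
  apply le_antisymm
  · exact le_iInf (fun n => (iInf_le _ n).trans (avoid_succ_le M T σ n s))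
  · exact le_iInf (fun n => iInf_le _ (n+1))

lemma prReach_ge_step (σ : M.Strat) {s : S} (hs : s ∉ T) (w : S) :
    M.P s (σ.1 s) w * M.prReach σ T w ≤ M.prReach σ T s := by
  rw [CertMDP.prReach, ENNReal.mul_iSup]
  apply iSup_le
  intro n
  apply le_iSup_of_le (n+1)
  simp only [CertMDP.prBounded, if_neg hs]
  exact Finset.single_le_sum (f := fun w => M.P s (σ.1 s) w * M.prBounded σ T n w)
    (fun i _ => zero_le) (Finset.mem_univ w)

/-- From `∑ p = 1`, `∑ p * x ≥ c`, and `x ≤ c` on the support, all values on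
the support equal `c`. -/
lemma support_eq_of_sum {p x : S → ℝ≥0∞} {c : ℝ≥0∞} (hp : ∑ w : S, p w = 1)
    (hc : c ≠ ⊤) (hx : ∀ w, p w ≠ 0 → x w ≤ c) (hge : c ≤ ∑ w : S, p w * x w) :
    ∀ w, p w ≠ 0 → x w = c := by
  intro w0 hw0
  by_contra hne
  have hxlt : x w0 < c := lt_of_le_of_ne (hx w0 hw0) hne
  have hple : ∀ w, p w ≤ 1 := fun w =>
    le_trans (Finset.single_le_sum (fun i _ => zero_le) (Finset.mem_univ w)) hp.le
  have hptop : p w0 ≠ ⊤ := (lt_of_le_of_lt (hple w0) ENNReal.one_lt_top).ne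
  have hsum_le : ∑ w : S, p w * x w < ∑ w : S, p w * c := by
    rw [← Finset.add_sum_erase _ _ (Finset.mem_univ w0),
        ← Finset.add_sum_erase _ (fun w => p w * c) (Finset.mem_univ w0)]
    have h1 : ∑ w ∈ Finset.univ.erase w0, p w * c ≠ ⊤ := by
      apply ne_top_of_le_ne_top (b := ∑ w : S, p w * c)
      · rw [← Finset.sum_mul, hp, one_mul]; exact hc
      · exact Finset.sum_le_sum_of_subset (Finset.erase_subset _ _)
    have h2 : ∑ w ∈ Finset.univ.erase w0, p w * x w ≤ ∑ w ∈ Finset.univ.erase w0, p w * c := by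
      apply Finset.sum_le_sum
      intro i _
      by_cases hpi : p i = 0
      · simp [hpi]
      · exact mul_le_mul_right (hx i hpi) _
    exact ENNReal.add_lt_add_of_lt_of_le (ne_top_of_le_ne_top h1 h2)
      ((ENNReal.mul_lt_mul_iff_right hw0 hptop).mpr hxlt) h2
  have hcc : ∑ w : S, p w * c = c := by rw [← Finset.sum_mul, hp, one_mul]
  rw [hcc] at hsum_le
  exact absurd (lt_of_le_of_lt hge hsum_le) (lt_irrefl c)

lemma iInf_sum_mul (p : S → ℝ≥0∞) (f : S → ℕ → ℝ≥0∞) (hf : ∀ w, Antitone (f w))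
    (hp : ∀ w, p w ≠ ⊤) :
    ⨅ n, ∑ w : S, p w * f w n = ∑ w : S, p w * ⨅ n, f w n := by
  rw [ENNReal.iInf_sum (f := fun n w => p w * f w n) (s := Finset.univ)]
  · exact Finset.sum_congr rfl (fun w _ =>
      (ENNReal.mul_iInf (fun h => absurd h (hp w))).symm)
  · intro t i j
    exact ⟨max i j, fun a _ =>
      ⟨mul_le_mul_right (hf a (le_max_left i j)) _, mul_le_mul_right (hf a (le_max_right i j)) _⟩⟩

end CertMDPAux

namespace CertMDPAux

open CertMDP

variable {S A : Type} [Fintype S] [Fintype A] (M : CertMDP S A) (T : Set S)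

/-- If `T` is not reached almost surely under `σ`, there is a `T`-free `σ`-path to a
state from which `T` is reached with probability zero. -/
lemma doom (σ : M.Strat) (s : S) (h : M.prReach σ T s ≠ 1) :
    ∃ u, Relation.ReflTransGen (fun x y => x ∉ T ∧ M.P x (σ.1 x) y ≠ 0) s u ∧
      M.prReach σ T u = 0 := by
  set stepR := fun x y => x ∉ T ∧ M.P x (σ.1 x) y ≠ 0 with hstepR
  set R := {u | Relation.ReflTransGen stepR s u} with hR
  set q := fun u => ⨅ n, avoidP M T σ n u with hq
  have hsR : s ∈ R := Relation.ReflTransGen.refl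
  have hqs : 0 < q s := iInf_avoid_pos M T σ h
  obtain ⟨v, hvR, hvmax⟩ := Set.exists_max_image R q (Set.toFinite R) ⟨s, hsR⟩
  have hqv : 0 < q v := lt_of_lt_of_le hqs (hvmax s hsR)
  have hq_le_one : ∀ u, q u ≤ 1 := fun u => (iInf_le _ 0).trans (avoid_le_one M T σ 0 u)
  have hqtop : q v ≠ ⊤ := (lt_of_le_of_lt (hq_le_one v) ENNReal.one_lt_top).ne
  have key : ∀ w, w ∈ R → q v ≤ q w →
      w ∉ T ∧ ∀ u, M.P w (σ.1 w) u ≠ 0 → (u ∈ R ∧ q v ≤ q u) := by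
    intro w hwR hqw
    have hwT : w ∉ T := by
      intro hT
      have h0 : q w ≤ 0 := (iInf_le _ 0).trans_eq (by simp [avoidP, hT])
      exact absurd (lt_of_lt_of_le hqv (hqw.trans h0)) (lt_irrefl 0)
    refine ⟨hwT, fun u hu => ?_⟩
    have huR : u ∈ R := hwR.tail ⟨hwT, hu⟩
    have hqweq : q w = ∑ u : S, M.P w (σ.1 w) u * q u := by
      have h1 : q w = ⨅ n, avoidP M T σ (n+1) w := (iInf_avoid_shift M T σ w).symm
      rw [h1]
      simp only [avoidP, if_neg hwT]
      exact iInf_sum_mul (M.P w (σ.1 w)) (fun u n => avoidP M T σ n u)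
        (fun u => avoid_anti M T σ u) (fun u => P_ne_top M w (σ.1 w) u)
    have hqvw : q w = q v := le_antisymm (hvmax w hwR) hqw
    have heq := support_eq_of_sum (enabled_sum M (σ.2 w)) hqtop
      (fun u hu => hvmax u (hwR.tail ⟨hwT, hu⟩))
      (by rw [← hqvw, hqweq]) u hu
    exact ⟨huR, heq.ge⟩
  have hav : ∀ n, ∀ w, w ∈ R → q v ≤ q w → avoidP M T σ n w = 1 := by
    intro n
    induction n with
    | zero => intro w hw hqw; simp [avoidP, (key w hw hqw).1]
    | succ n ih =>
      intro w hw hqw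
      simp only [avoidP, if_neg (key w hw hqw).1]
      calc (∑ u : S, M.P w (σ.1 w) u * avoidP M T σ n u)
          = ∑ u : S, M.P w (σ.1 w) u := by
            apply Finset.sum_congr rfl
            intro u _
            by_cases hu : M.P w (σ.1 w) u = 0
            · simp [hu]
            · rw [ih u ((key w hw hqw).2 u hu).1 ((key w hw hqw).2 u hu).2, mul_one]
        _ = 1 := enabled_sum M (σ.2 w)
  exact ⟨v, hvR, prReach_eq_zero M T σ (fun n => hav n v hvR le_rfl)⟩

end CertMDPAux

namespace CertMDPAux

open CertMDP

variable {S A : Type} [Fintype S] [Fintype A] (M : CertMDP S A) (T : Set S)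

attribute [local instance] Classical.propDecidable

/-- States with minimal reachability probability zero. -/
def Zset : Set S := {u | M.optPr ODir.dmin T u = 0}

lemma Z_not_T {u : S} (hu : u ∈ Zset M T) : u ∉ T := by
  intro hT
  have h1 : (1:ℝ≥0∞) ≤ M.optPr ODir.dmin T u :=
    le_optPr_min M T (fun σ => (prReach_T M T σ hT).ge)
  rw [show M.optPr ODir.dmin T u = 0 from hu] at h1
  exact absurd h1 (by simp)

lemma Z_closed {u : S} (hu : u ∈ Zset M T) :
    ∃ a ∈ M.enabled u, ∀ w, M.P u a w ≠ 0 → w ∈ Zset M T := by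
  by_contra hno
  push_neg at hno
  have huT : u ∉ T := Z_not_T M T hu
  have hno' : ∀ a : A, ∃ w, a ∈ M.enabled u → (M.P u a w ≠ 0 ∧ w ∉ Zset M T) := by
    intro a
    by_cases ha : a ∈ M.enabled u
    · obtain ⟨w, hw1, hw2⟩ := hno a ha
      exact ⟨w, fun _ => ⟨hw1, hw2⟩⟩
    · exact ⟨u, fun h => absurd h ha⟩
  choose w hw using hno'
  obtain ⟨a0, ha0, hmin⟩ := Set.exists_min_image (M.enabled u)
    (fun a => M.P u a (w a) * M.optPr ODir.dmin T (w a)) (Set.toFinite _) (enabled_ne M u)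
  set ε := M.P u a0 (w a0) * M.optPr ODir.dmin T (w a0) with hε
  have hεpos : 0 < ε := by
    obtain ⟨h1, h2⟩ := hw a0 ha0
    have h2' : M.optPr ODir.dmin T (w a0) ≠ 0 := h2
    exact ENNReal.mul_pos h1 h2'
  have hεle : ε ≤ M.optPr ODir.dmin T u := by
    apply le_optPr_min
    intro σ
    calc ε ≤ M.P u (σ.1 u) (w (σ.1 u)) * M.optPr ODir.dmin T (w (σ.1 u)) := hmin _ (σ.2 u)
      _ ≤ M.P u (σ.1 u) (w (σ.1 u)) * M.prReach σ T (w (σ.1 u)) :=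
          mul_le_mul_right (optPr_min_le M T σ _) _
      _ ≤ M.prReach σ T u := prReach_ge_step M T σ huT _
  rw [show M.optPr ODir.dmin T u = 0 from hu] at hεle
  exact absurd (lt_of_lt_of_le hεpos hεle) (lt_irrefl 0)

/-- A strategy avoiding `T` forever on a closed region. -/
lemma avoid_region (D : Set S)
    (hD : ∀ w ∈ D, w ∉ T ∧ ∃ a ∈ M.enabled w, ∀ u, M.P w a u ≠ 0 → u ∈ D) :
    ∃ τ : M.Strat, ∀ v ∈ D, M.prReach τ T v = 0 := by
  have hch : ∀ w : S, ∃ a, a ∈ M.enabled w ∧ (w ∈ D → ∀ u, M.P w a u ≠ 0 → u ∈ D) := by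
    intro w
    by_cases hw : w ∈ D
    · obtain ⟨-, a, ha, hcl⟩ := hD w hw
      exact ⟨a, ha, fun _ => hcl⟩
    · exact ⟨(M.exists_enabled w).choose, (M.exists_enabled w).choose_spec, fun h => absurd h hw⟩
  choose act hact1 hact2 using hch
  refine ⟨⟨act, hact1⟩, fun v hv => ?_⟩
  apply prReach_eq_zero
  have hone : ∀ n, ∀ w ∈ D, avoidP M T ⟨act, hact1⟩ n w = 1 := by
    intro n
    induction n with
    | zero => intro w hw; simp [avoidP, (hD w hw).1]
    | succ n ih =>
      intro w hw
      simp only [avoidP, if_neg (hD w hw).1]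
      calc (∑ u : S, M.P w (act w) u * avoidP M T ⟨act, hact1⟩ n u)
          = ∑ u : S, M.P w (act w) u := by
            apply Finset.sum_congr rfl
            intro u _
            by_cases hu : M.P w (act w) u = 0
            · simp [hu]
            · rw [ih u (hact2 w hw u hu), mul_one]
        _ = 1 := enabled_sum M (hact1 w)
  exact fun n => hone n v hv

lemma Z_reach_zero : ∃ τ : M.Strat, ∀ v ∈ Zset M T, M.prReach τ T v = 0 :=
  avoid_region M T (Zset M T) (fun w hw => ⟨Z_not_T M T hw, Z_closed M T hw⟩)

/-- any-action `T`-free step relation -/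
def AnyStep (x y : S) : Prop := x ∉ T ∧ ∃ a ∈ M.enabled x, M.P x a y ≠ 0

/-- States from which no `T`-free path reaches `Zset`. -/
def Vset : Set S := {v | ∀ u, Relation.ReflTransGen (AnyStep M T) v u → u ∉ Zset M T}

lemma V_not_Z {v : S} (hv : v ∈ Vset M T) : v ∉ Zset M T :=
  hv v Relation.ReflTransGen.refl

lemma V_closed {v : S} (hv : v ∈ Vset M T) (hvT : v ∉ T) {a : A} (ha : a ∈ M.enabled v)
    {w : S} (hP : M.P v a w ≠ 0) : w ∈ Vset M T :=
  fun u hwu => hv u (Relation.ReflTransGen.head ⟨hvT, a, ha, hP⟩ hwu)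

/-- states with a `T`-free path of length `≤ n` to `Zset` -/
def reachN : ℕ → S → Prop
  | 0, v => v ∈ Zset M T
  | n+1, v => reachN n v ∨ (v ∉ T ∧ ∃ a ∈ M.enabled v, ∃ w, M.P v a w ≠ 0 ∧ reachN n w)

lemma reach_exists {v : S} (hv : v ∉ Vset M T) : ∃ n, reachN M T n v := by
  simp only [Vset, Set.mem_setOf_eq, not_forall] at hv
  obtain ⟨u, hvu, huZ⟩ := hv
  rw [not_not] at huZ
  induction hvu using Relation.ReflTransGen.head_induction_on with
  | refl => exact ⟨0, huZ⟩
  | head hstep _ ih =>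
    obtain ⟨n, hn⟩ := ih
    obtain ⟨hT, a, ha, hP⟩ := hstep
    exact ⟨n+1, Or.inr ⟨hT, a, ha, _, hP, hn⟩⟩

lemma pick {u : S} (hz : u ∉ Zset M T) (hd : ∃ n, reachN M T n u) :
    ∃ a, a ∈ M.enabled u ∧ u ∉ T ∧ ∃ w, M.P u a w ≠ 0 ∧
      ∃ hd' : (∃ n, reachN M T n w), Nat.find hd' < Nat.find hd := by
  have hspec : reachN M T (Nat.find hd) u := Nat.find_spec hd
  rcases Nat.eq_zero_or_pos (Nat.find hd) with h0 | hpos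
  · rw [h0] at hspec; exact absurd hspec hz
  · obtain ⟨m, hm⟩ := Nat.exists_eq_succ_of_ne_zero hpos.ne'
    rw [hm] at hspec
    rcases hspec with hl | ⟨hT, a, ha, w, hP, hw⟩
    · have := Nat.find_min' hd hl; omega
    · refine ⟨a, ha, hT, w, hP, ⟨m, hw⟩, ?_⟩
      have h2 : Nat.find (⟨m, hw⟩ : ∃ n, reachN M T n w) ≤ m := Nat.find_min' _ hw
      omega

/-- Off `Vset`, some strategy fails to reach `T` almost surely. -/
lemma notV_not_as {v : S} (hv : v ∉ Vset M T) : ∃ τ : M.Strat, M.prReach τ T v ≠ 1 := by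
  have hchoice : ∀ u : S, ∃ a, a ∈ M.enabled u ∧
      (u ∈ Zset M T → ∀ w, M.P u a w ≠ 0 → w ∈ Zset M T) ∧
      ((u ∉ Zset M T ∧ ∃ n, reachN M T n u) →
        ∃ hd : (∃ n, reachN M T n u), u ∉ T ∧ ∃ w, M.P u a w ≠ 0 ∧
          ∃ hd' : (∃ n, reachN M T n w), Nat.find hd' < Nat.find hd) := by
    intro u
    by_cases hz : u ∈ Zset M T
    · obtain ⟨a, ha, hcl⟩ := Z_closed M T hz
      exact ⟨a, ha, fun _ => hcl, fun hc => absurd hz hc.1⟩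
    · by_cases h : ∃ n, reachN M T n u
      · obtain ⟨a, ha, hT, w, hP, hd', hlt⟩ := pick M T hz h
        exact ⟨a, ha, fun hzz => absurd hzz hz, fun _ => ⟨h, hT, w, hP, hd', hlt⟩⟩
      · exact ⟨(M.exists_enabled u).choose, (M.exists_enabled u).choose_spec,
          fun hzz => absurd hzz hz, fun hc => absurd hc.2 h⟩
  choose act hact1 hactZ hact2 using hchoice
  set τ : M.Strat := ⟨act, hact1⟩ with hτ
  have hZone : ∀ n, ∀ u ∈ Zset M T, avoidP M T τ n u = 1 := by
    intro n
    induction n with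
    | zero => intro u hu; simp [avoidP, Z_not_T M T hu]
    | succ n ih =>
      intro u hu
      simp only [avoidP, if_neg (Z_not_T M T hu)]
      calc (∑ w : S, M.P u (τ.1 u) w * avoidP M T τ n w)
          = ∑ w : S, M.P u (τ.1 u) w := by
            apply Finset.sum_congr rfl
            intro w _
            by_cases hw : M.P u (τ.1 u) w = 0
            · simp [hw]
            · rw [ih w (hactZ u hu w hw), mul_one]
        _ = 1 := enabled_sum M (τ.2 u)
  have hpos : ∀ N, ∀ u, ∀ h : (∃ n, reachN M T n u), Nat.find h ≤ N →
      0 < ⨅ m, avoidP M T τ m u := by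
    intro N
    induction N with
    | zero =>
      intro u h hle
      by_cases hz : u ∈ Zset M T
      · have h1 : ⨅ m, avoidP M T τ m u = 1 := by
          simp [fun m => hZone m u hz]
        rw [h1]; norm_num
      · obtain ⟨hd, hT, w, hP, hd', hlt⟩ := hact2 u ⟨hz, h⟩
        have : Nat.find hd = Nat.find h := rfl
        omega
    | succ N ih =>
      intro u h hle
      by_cases hz : u ∈ Zset M T
      · have h1 : ⨅ m, avoidP M T τ m u = 1 := by
          simp [fun m => hZone m u hz]
        rw [h1]; norm_num
      · obtain ⟨hd, hT, w, hP, hd', hlt⟩ := hact2 u ⟨hz, h⟩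
        have heq : Nat.find hd = Nat.find h := rfl
        have hw : 0 < ⨅ m, avoidP M T τ m w := ih w hd' (by omega)
        have hstep : ∀ m, M.P u (τ.1 u) w * avoidP M T τ m w ≤ avoidP M T τ (m+1) u := by
          intro m
          simp only [avoidP, if_neg hT]
          exact Finset.single_le_sum (f := fun w => M.P u (τ.1 u) w * avoidP M T τ m w)
            (fun i _ => zero_le) (Finset.mem_univ w)
        calc (0:ℝ≥0∞) < M.P u (τ.1 u) w * ⨅ m, avoidP M T τ m w :=
              ENNReal.mul_pos hP hw.ne'
          _ = ⨅ m, M.P u (τ.1 u) w * avoidP M T τ m w :=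
              ENNReal.mul_iInf (fun htop => absurd htop (P_ne_top M u (τ.1 u) w))
          _ ≤ ⨅ m, avoidP M T τ (m+1) u := le_iInf (fun m => (iInf_le _ m).trans (hstep m))
          _ = ⨅ m, avoidP M T τ m u := iInf_avoid_shift M T τ u
  refine ⟨τ, fun heq => ?_⟩
  obtain ⟨n, hn⟩ := reach_exists M T hv
  have h1 := hpos (Nat.find (⟨n, hn⟩ : ∃ n, reachN M T n v)) v ⟨n, hn⟩ le_rfl
  rw [iInf_avoid_eq_zero M T τ heq] at h1
  exact absurd h1 (lt_irrefl 0)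

end CertMDPAux

namespace CertMDPAux

open CertMDP

variable {S A : Type} [Fintype S] [Fintype A] (M : CertMDP S A) (T : Set S)

/-- Maximal (over actions) probability of avoiding `T` for `n` steps. -/
def maxAvoid : ℕ → S → ℝ≥0∞
  | 0, v => if v ∈ T then 0 else 1
  | n+1, v => if v ∈ T then 0
      else sSup ((fun a => ∑ w : S, M.P v a w * maxAvoid n w) '' M.enabled v)

lemma mA_T {v : S} (h : v ∈ T) (n : ℕ) : maxAvoid M T n v = 0 := by
  cases n <;> simp [maxAvoid, h]

lemma mA_le_one : ∀ n v, maxAvoid M T n v ≤ 1 := by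
  intro n
  induction n with
  | zero => intro v; simp only [maxAvoid]; split <;> simp
  | succ n ih =>
    intro v
    simp only [maxAvoid]
    split
    · simp
    · apply sSup_le
      rintro b ⟨a, ha, rfl⟩
      calc (∑ w : S, M.P v a w * maxAvoid M T n w)
          ≤ ∑ w : S, M.P v a w * 1 := Finset.sum_le_sum (fun w _ => mul_le_mul_right (ih w) _)
        _ ≤ 1 := by simpa using sum_P_le_one M v a

lemma mA_succ_le : ∀ n v, maxAvoid M T (n+1) v ≤ maxAvoid M T n v := by
  intro n
  induction n with
  | zero =>
    intro v
    simp only [maxAvoid]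
    split
    · simp
    · apply sSup_le
      rintro b ⟨a, ha, rfl⟩
      calc (∑ w : S, M.P v a w * (if w ∈ T then 0 else 1))
          ≤ ∑ w : S, M.P v a w * 1 := by
            apply Finset.sum_le_sum; intro w _; apply mul_le_mul_right; split <;> simp
        _ ≤ 1 := by simpa using sum_P_le_one M v a
  | succ n ih =>
    intro v
    simp only [maxAvoid]
    split
    · exact le_rfl
    · apply sSup_le
      rintro b ⟨a, ha, rfl⟩
      refine le_sSup_of_le ⟨a, ha, rfl⟩ ?_
      exact Finset.sum_le_sum (fun w _ => mul_le_mul_right (ih w) _)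

lemma mA_anti (v : S) : Antitone (fun n => maxAvoid M T n v) :=
  antitone_nat_of_succ_le (fun n => mA_succ_le M T n v)

lemma mA_sSup_mem {v : S} (hvT : v ∉ T) (n : ℕ) :
    ∃ a ∈ M.enabled v, maxAvoid M T (n+1) v = ∑ w : S, M.P v a w * maxAvoid M T n w := by
  have himg : ((fun a => ∑ w : S, M.P v a w * maxAvoid M T n w) '' M.enabled v).Nonempty :=
    (enabled_ne M v).image _
  have hfin : ((fun a => ∑ w : S, M.P v a w * maxAvoid M T n w) '' M.enabled v).Finite :=
    (Set.toFinite _).image _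
  obtain ⟨a, ha, haeq⟩ := Set.Nonempty.csSup_mem himg hfin
  refine ⟨a, ha, ?_⟩
  simp only [maxAvoid, if_neg hvT]
  exact haeq.symm

lemma allones_Z {v : S} (hv : ∀ n, maxAvoid M T n v = 1) : v ∈ Zset M T := by
  set G := {w : S | ∀ n, maxAvoid M T n w = 1} with hG
  have hGT : ∀ w ∈ G, w ∉ T := by
    intro w hw hT
    have := hw 0
    rw [mA_T M T hT] at this
    simp at this
  have hGcl : ∀ w ∈ G, w ∉ T ∧ ∃ a ∈ M.enabled w, ∀ u, M.P w a u ≠ 0 → u ∈ G := by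
    intro w hw
    refine ⟨hGT w hw, ?_⟩
    have hch : ∀ n : ℕ, ∃ a, a ∈ M.enabled w ∧ ∀ u, M.P w a u ≠ 0 → maxAvoid M T n u = 1 := by
      intro n
      obtain ⟨a, ha, haeq⟩ := mA_sSup_mem M T (hGT w hw) n
      refine ⟨a, ha, ?_⟩
      apply support_eq_of_sum (enabled_sum M ha) ENNReal.one_ne_top
        (fun u _ => mA_le_one M T n u)
      rw [← haeq, hw (n+1)]
    choose f hf1 hf2 using hch
    obtain ⟨a, hfib⟩ := Finite.exists_infinite_fiber f
    have hinf : (f ⁻¹' {a}).Infinite := Set.infinite_coe_iff.mp hfib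
    obtain ⟨n₀, hn₀⟩ := hinf.nonempty
    have ha : a ∈ M.enabled w := by
      have := hf1 n₀
      rwa [show f n₀ = a from hn₀] at this
    refine ⟨a, ha, ?_⟩
    intro u hu m
    obtain ⟨k, hk, hkgt⟩ := hinf.exists_gt m
    have hk' : f k = a := hk
    have h1 : maxAvoid M T k u = 1 := by
      have := hf2 k u
      rw [hk'] at this
      exact this hu
    refine le_antisymm (mA_le_one M T m u) ?_
    rw [← h1]
    exact mA_anti M T u hkgt.le
  obtain ⟨τ, hτ⟩ := avoid_region M T G hGcl
  have : M.optPr ODir.dmin T v ≤ 0 := (optPr_min_le M T τ v).trans_eq (hτ v hv)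
  exact le_antisymm this (zero_le)

lemma exists_mA_lt {v : S} (hv : v ∈ Vset M T) : ∃ n, maxAvoid M T n v < 1 := by
  by_contra h
  push_neg at h
  have hall : ∀ n, maxAvoid M T n v = 1 := fun n => le_antisymm (mA_le_one M T n v) (h n)
  exact V_not_Z M T hv (allones_Z M T hall)

lemma t_fin : ∀ v ∈ Vset M T, (∑' n, maxAvoid M T n v) ≠ ⊤ := by
  have hex : ∀ v : S, ∃ n, v ∈ Vset M T → maxAvoid M T n v < 1 := by
    intro v
    by_cases hv : v ∈ Vset M T
    · obtain ⟨n, hn⟩ := exists_mA_lt M T hv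
      exact ⟨n, fun _ => hn⟩
    · exact ⟨0, fun h => absurd h hv⟩
  choose f hf using hex
  set N := (Finset.univ.sup f) + 1 with hN
  have hNpos : 0 < N := Nat.succ_pos _
  have hAN : ∀ v ∈ Vset M T, maxAvoid M T N v < 1 := by
    intro v hv
    refine lt_of_le_of_lt ?_ (hf v hv)
    exact mA_anti M T v (le_trans (Finset.le_sup (Finset.mem_univ v)) (Nat.le_succ _))
  set c := Finset.univ.sup (fun v => if v ∈ Vset M T then maxAvoid M T N v else 0) with hc
  have hc1 : c < 1 := by
    rw [hc, Finset.sup_lt_iff zero_lt_one]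
    intro v _
    split
    · exact hAN v ‹_›
    · exact zero_lt_one
  have hcv : ∀ v ∈ Vset M T, maxAvoid M T N v ≤ c := by
    intro v hv
    calc maxAvoid M T N v = if v ∈ Vset M T then maxAvoid M T N v else 0 := (if_pos hv).symm
      _ ≤ c := by
        rw [hc]
        exact Finset.le_sup (f := fun v => if v ∈ Vset M T then maxAvoid M T N v else 0)
          (Finset.mem_univ v)
  have propagate : ∀ m, ∀ v ∈ Vset M T, maxAvoid M T (m + N) v ≤ c * maxAvoid M T m v := by
    intro m
    induction m with
    | zero =>
      intro v hv
      by_cases hT : v ∈ T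
      · rw [mA_T M T hT]; exact zero_le
      · rw [zero_add]
        calc maxAvoid M T N v ≤ c := hcv v hv
          _ = c * maxAvoid M T 0 v := by simp [maxAvoid, if_neg hT]
    | succ m ih =>
      intro v hv
      by_cases hT : v ∈ T
      · rw [mA_T M T hT]; exact zero_le
      · have heq : m + 1 + N = (m + N) + 1 := by omega
        rw [heq]
        simp only [maxAvoid, if_neg hT]
        apply sSup_le
        rintro b ⟨a, ha, rfl⟩
        calc (∑ w : S, M.P v a w * maxAvoid M T (m+N) w)
            ≤ ∑ w : S, M.P v a w * (c * maxAvoid M T m w) := by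
              apply Finset.sum_le_sum
              intro w _
              by_cases hP : M.P v a w = 0
              · simp [hP]
              · exact mul_le_mul_right (ih w (V_closed M T hv hT ha hP)) _
          _ = c * ∑ w : S, M.P v a w * maxAvoid M T m w := by
              rw [Finset.mul_sum]
              exact Finset.sum_congr rfl (fun w _ => mul_left_comm _ _ _)
          _ ≤ c * sSup ((fun a => ∑ w : S, M.P v a w * maxAvoid M T m w) '' M.enabled v) := by
              have hmem : (∑ w : S, M.P v a w * maxAvoid M T m w) ∈
                  ((fun a => ∑ w : S, M.P v a w * maxAvoid M T m w) '' M.enabled v) :=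
                ⟨a, ha, rfl⟩
              exact mul_le_mul_right (le_sSup hmem) _
  have geo : ∀ k, ∀ v ∈ Vset M T, maxAvoid M T (k * N) v ≤ c ^ k := by
    intro k
    induction k with
    | zero => intro v hv; simpa using mA_le_one M T 0 v
    | succ k ih =>
      intro v hv
      have heq : (k + 1) * N = k * N + N := by ring
      rw [heq]
      calc maxAvoid M T (k * N + N) v ≤ c * maxAvoid M T (k * N) v := propagate (k * N) v hv
        _ ≤ c * c ^ k := mul_le_mul_right (ih v hv) _
        _ = c ^ (k + 1) := by ring
  intro v hv
  have hbound : ∀ n, maxAvoid M T n v ≤ c ^ (n / N) := by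
    intro n
    calc maxAvoid M T n v ≤ maxAvoid M T ((n / N) * N) v :=
          mA_anti M T v (Nat.div_mul_le_self n N)
      _ ≤ c ^ (n / N) := geo (n / N) v hv
  have hle : (∑' n, maxAvoid M T n v) ≤ ∑' n : ℕ, c ^ (n / N) :=
    ENNReal.tsum_le_tsum hbound
  haveI : NeZero N := ⟨hNpos.ne'⟩
  have hsum : (∑' n : ℕ, c ^ (n / N)) = (N : ℝ≥0∞) * (1 - c)⁻¹ := by
    have he := Equiv.tsum_eq (Nat.divModEquiv N).symm (fun n : ℕ => c ^ (n / N))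
    rw [← he]
    have hval : ∀ p : ℕ × Fin N, ((Nat.divModEquiv N).symm p : ℕ) / N = p.1 := by
      intro p
      show (p.1 * N + (p.2 : ℕ)) / N = p.1
      rw [Nat.add_comm, Nat.add_mul_div_right _ _ hNpos, Nat.div_eq_of_lt p.2.isLt, Nat.zero_add]
    calc (∑' p : ℕ × Fin N, c ^ (((Nat.divModEquiv N).symm p : ℕ) / N))
        = ∑' p : ℕ × Fin N, c ^ p.1 := by
          apply tsum_congr; intro p; rw [hval]
      _ = ∑' k : ℕ, ∑' j : Fin N, c ^ k := ENNReal.tsum_prod (f := fun k (_ : Fin N) => c ^ k)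
      _ = ∑' k : ℕ, (N : ℝ≥0∞) * c ^ k := by
          apply tsum_congr; intro k
          rw [tsum_fintype]
          simp [Finset.sum_const, nsmul_eq_mul]
      _ = (N : ℝ≥0∞) * ∑' k : ℕ, c ^ k := ENNReal.tsum_mul_left
      _ = (N : ℝ≥0∞) * (1 - c)⁻¹ := by rw [ENNReal.tsum_geometric]
  refine ne_top_of_le_ne_top ?_ (hle.trans_eq hsum)
  apply ENNReal.mul_ne_top (ENNReal.natCast_ne_top N)
  exact ENNReal.inv_ne_top.mpr (tsub_pos_of_lt hc1).ne'

lemma tRec {v : S} (hvT : v ∉ T) {a : A} (ha : a ∈ M.enabled v) :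
    1 + ∑ w : S, M.P v a w * (∑' n, maxAvoid M T n w) ≤ ∑' n, maxAvoid M T n v := by
  rw [tsum_eq_zero_add' ENNReal.summable]
  have h0 : maxAvoid M T 0 v = 1 := by simp [maxAvoid, if_neg hvT]
  rw [h0]
  apply add_le_add_right
  calc (∑ w : S, M.P v a w * (∑' n, maxAvoid M T n w))
      = ∑ w : S, ∑' n, M.P v a w * maxAvoid M T n w := by
        exact Finset.sum_congr rfl (fun w _ => ENNReal.tsum_mul_left.symm)
    _ = ∑' n, ∑ w : S, M.P v a w * maxAvoid M T n w :=
        (Summable.tsum_finsetSum (fun w _ => ENNReal.summable)).symm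
    _ ≤ ∑' n, maxAvoid M T (n+1) v := by
        apply ENNReal.tsum_le_tsum
        intro n
        simp only [maxAvoid, if_neg hvT]
        exact le_sSup ⟨a, ha, rfl⟩

end CertMDPAux

namespace CertMDPAux

open CertMDP

variable {S A : Type} [Fintype S] [Fintype A] (M : CertMDP S A) (T : Set S) (rew : S → ℝ≥0∞)

/-- The modified Bellman operator as a monotone map. -/
def Phi : (S → ℝ≥0∞) →o (S → ℝ≥0∞) where
  toFun := M.modBellmanRMax T rew
  monotone' := by
    intro x y hxy s
    unfold CertMDP.modBellmanRMax CertMDP.bellmanR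
    simp only [ODir.run]
    split
    · exact le_rfl
    · split
      · exact le_rfl
      · apply add_le_add_right
        apply sSup_le
        rintro b ⟨a, ha, rfl⟩
        refine le_sSup_of_le ⟨a, ha, rfl⟩ ?_
        exact Finset.sum_le_sum (fun w _ => mul_le_mul_right (hxy w) _)

/-- The least fixed point of the modified Bellman operator. -/
def Lfp : S → ℝ≥0∞ := OrderHom.lfp (Phi M T rew)

lemma Lfp_fix : M.modBellmanRMax T rew (Lfp M T rew) = Lfp M T rew :=
  OrderHom.map_lfp (Phi M T rew)

lemma Lfp_Z {s : S} (h : M.optPr ODir.dmin T s = 0) : Lfp M T rew s = ⊤ := by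
  have h1 := congrFun (Lfp_fix M T rew) s
  rw [← h1]
  simp [CertMDP.modBellmanRMax, h]

lemma Lfp_T {s : S} (h0 : M.optPr ODir.dmin T s ≠ 0) (hT : s ∈ T) : Lfp M T rew s = 0 := by
  have h1 := congrFun (Lfp_fix M T rew) s
  rw [← h1]
  simp [CertMDP.modBellmanRMax, CertMDP.bellmanR, h0, hT]

lemma Lfp_rec {s : S} (h0 : M.optPr ODir.dmin T s ≠ 0) (hT : s ∉ T) :
    Lfp M T rew s = rew s + sSup ((fun a => ∑ w : S, M.P s a w * Lfp M T rew w) '' M.enabled s) := by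
  have h1 := congrFun (Lfp_fix M T rew) s
  rw [← h1]
  simp [CertMDP.modBellmanRMax, CertMDP.bellmanR, h0, hT, ODir.run]

lemma erB_le_Lfp (σ : M.Strat) : ∀ n s, M.erBounded σ T rew n s ≤ Lfp M T rew s := by
  intro n
  induction n with
  | zero => intro s; simp [CertMDP.erBounded]
  | succ n ih =>
    intro s
    by_cases h0 : M.optPr ODir.dmin T s = 0
    · rw [Lfp_Z M T rew h0]; exact le_top
    · by_cases hT : s ∈ T
      · simp [CertMDP.erBounded, hT]
      · rw [Lfp_rec M T rew h0 hT]
        simp only [CertMDP.erBounded, if_neg hT]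
        apply add_le_add_right
        refine le_sSup_of_le ⟨σ.1 s, σ.2 s, rfl⟩ ?_
        exact Finset.sum_le_sum (fun w _ => mul_le_mul_right (ih w) _)

lemma Lfp_top_of_not_as (σ : M.Strat) {s : S} (h : M.prReach σ T s ≠ 1) :
    Lfp M T rew s = ⊤ := by
  obtain ⟨u, hreach, hu0⟩ := doom M T σ s h
  have huZ : M.optPr ODir.dmin T u = 0 :=
    le_antisymm ((optPr_min_le M T σ u).trans_eq hu0) (zero_le)
  clear h hu0
  induction hreach using Relation.ReflTransGen.head_induction_on with
  | refl => exact Lfp_Z M T rew huZ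
  | @head x c hstep hrest ih =>
    obtain ⟨hxT, hP⟩ := hstep
    by_cases h0 : M.optPr ODir.dmin T x = 0
    · exact Lfp_Z M T rew h0
    · rw [Lfp_rec M T rew h0 hxT]
      refine top_unique ?_
      have h1 : M.P x (σ.1 x) c * Lfp M T rew c ≤ ∑ w : S, M.P x (σ.1 x) w * Lfp M T rew w :=
        Finset.single_le_sum (f := fun w => M.P x (σ.1 x) w * Lfp M T rew w)
          (fun i _ => zero_le) (Finset.mem_univ c)
      rw [ih, ENNReal.mul_top hP] at h1
      calc (⊤:ℝ≥0∞) ≤ ∑ w : S, M.P x (σ.1 x) w * Lfp M T rew w := h1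
        _ ≤ sSup ((fun a => ∑ w : S, M.P x a w * Lfp M T rew w) '' M.enabled x) :=
            le_sSup ⟨σ.1 x, σ.2 x, rfl⟩
        _ ≤ rew x + sSup ((fun a => ∑ w : S, M.P x a w * Lfp M T rew w) '' M.enabled x) :=
            le_add_self

lemma optER_le_Lfp (s : S) : M.optER ODir.dmax T rew s ≤ Lfp M T rew s := by
  apply sSup_le
  rintro p ⟨σ, rfl⟩
  unfold CertMDP.expRew
  split
  · exact iSup_le (fun n => erB_le_Lfp M T rew σ n s)
  · rw [Lfp_top_of_not_as M T rew σ ‹_›]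

lemma notV_optER_top {v : S} (hv : v ∉ Vset M T) : M.optER ODir.dmax T rew v = ⊤ := by
  obtain ⟨τ, hτ⟩ := notV_not_as M T hv
  have hτtop : M.expRew τ T rew v = ⊤ := if_neg hτ
  exact top_unique (le_sSup ⟨τ, hτtop.symm⟩)

lemma Lfp_fin_on_V :
    ∀ v ∈ Vset M T, Lfp M T rew v ≤ (1 + ∑ s : S, rew s) * ∑' n, maxAvoid M T n v := by
  set Rm := 1 + ∑ s : S, rew s with hRm
  set x : S → ℝ≥0∞ := fun v => if v ∈ Vset M T then Rm * ∑' n, maxAvoid M T n v else ⊤ with hx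
  have hpre : (Phi M T rew) x ≤ x := by
    intro v
    by_cases hv : v ∈ Vset M T
    · have hxv : x v = Rm * ∑' n, maxAvoid M T n v := if_pos hv
      have h0 : M.optPr ODir.dmin T v ≠ 0 := V_not_Z M T hv
      show M.modBellmanRMax T rew x v ≤ x v
      unfold CertMDP.modBellmanRMax CertMDP.bellmanR
      rw [if_neg h0]
      by_cases hT : v ∈ T
      · rw [if_pos hT]; exact zero_le
      · rw [if_neg hT, hxv]
        simp only [ODir.run]
        rw [sSup_image']
        haveI : Nonempty (M.enabled v) := (enabled_ne M v).to_subtype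
        rw [ENNReal.add_iSup]
        apply iSup_le
        rintro ⟨a, ha⟩
        have hsum : (∑ w : S, M.P v a w * x w)
            ≤ Rm * ∑ w : S, M.P v a w * ∑' n, maxAvoid M T n w := by
          rw [Finset.mul_sum]
          apply Finset.sum_le_sum
          intro w _
          by_cases hP : M.P v a w = 0
          · simp [hP]
          · have hwV : w ∈ Vset M T := V_closed M T hv hT ha hP
            rw [show x w = Rm * ∑' n, maxAvoid M T n w from if_pos hwV, mul_left_comm]
        have hrle : rew v ≤ Rm := by
          rw [hRm]
          exact (Finset.single_le_sum (fun i _ => zero_le) (Finset.mem_univ v)).trans le_add_self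
        calc rew v + ∑ w : S, M.P v a w * x w
            ≤ Rm * 1 + Rm * ∑ w : S, M.P v a w * ∑' n, maxAvoid M T n w := by
              apply add_le_add _ hsum
              rw [mul_one]
              exact hrle
          _ = Rm * (1 + ∑ w : S, M.P v a w * ∑' n, maxAvoid M T n w) := (mul_add _ _ _).symm
          _ ≤ Rm * ∑' n, maxAvoid M T n v := mul_le_mul_right (tRec M T hT ha) _
    · have hxv : x v = ⊤ := if_neg hv
      rw [hxv]
      exact le_top
  intro v hv
  have hle := OrderHom.lfp_le (Phi M T rew) hpre
  calc Lfp M T rew v ≤ x v := hle v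
    _ = Rm * ∑' n, maxAvoid M T n v := if_pos hv

lemma Lfp_le_optER (hrew : ∀ s, rew s ≠ ⊤) (s : S) :
    Lfp M T rew s ≤ M.optER ODir.dmax T rew s := by
  by_cases hvV : s ∈ Vset M T
  · -- construct the argmax strategy
    have hargmax : ∀ v : S, ∃ a, a ∈ M.enabled v ∧ ((v ∉ T ∧ M.optPr ODir.dmin T v ≠ 0) →
        Lfp M T rew v = rew v + ∑ w : S, M.P v a w * Lfp M T rew w) := by
      intro v
      by_cases h : v ∉ T ∧ M.optPr ODir.dmin T v ≠ 0
      · have hrec := Lfp_rec M T rew h.2 h.1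
        have himg : ((fun a => ∑ w : S, M.P v a w * Lfp M T rew w) '' M.enabled v).Nonempty :=
          (enabled_ne M v).image _
        obtain ⟨a, ha, haeq⟩ := Set.Nonempty.csSup_mem himg ((Set.toFinite _).image _)
        have haeq' : (∑ w : S, M.P v a w * Lfp M T rew w)
            = sSup ((fun a => ∑ w : S, M.P v a w * Lfp M T rew w) '' M.enabled v) := haeq
        exact ⟨a, ha, fun _ => by rw [hrec, ← haeq']⟩
      · exact ⟨(M.exists_enabled v).choose, (M.exists_enabled v).choose_spec,
          fun hc => absurd hc h⟩
    choose act hact1 hact2 using hargmax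
    set σs : M.Strat := ⟨act, hact1⟩ with hσs
    have hrecV : ∀ v ∈ Vset M T, v ∉ T →
        Lfp M T rew v = rew v + ∑ w : S, M.P v (σs.1 v) w * Lfp M T rew w :=
      fun v hv hvT => hact2 v ⟨hvT, V_not_Z M T hv⟩
    have hAS : ∀ v ∈ Vset M T, M.prReach σs T v = 1 := by
      intro v hv
      by_contra hne
      obtain ⟨u, hreach, hu0⟩ := doom M T σs v hne
      have huZ : u ∈ Zset M T :=
        le_antisymm ((optPr_min_le M T σs u).trans_eq hu0) (zero_le)
      have hany : Relation.ReflTransGen (AnyStep M T) v u :=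
        Relation.ReflTransGen.mono (p := AnyStep M T) (by intro x y hxy; exact ⟨hxy.1, σs.1 x, σs.2 x, hxy.2⟩) _ _ hreach
      exact hv u hany huZ
    set Λ := ∑ w : S, if w ∈ Vset M T then Lfp M T rew w else 0 with hΛ
    have hRmtop : (1 + ∑ s : S, rew s) ≠ ⊤ := by
      apply ENNReal.add_ne_top.mpr
      exact ⟨ENNReal.one_ne_top, (ENNReal.sum_lt_top.mpr fun w _ => (hrew w).lt_top).ne⟩
    have hΛtop : Λ ≠ ⊤ := by
      rw [hΛ]
      apply (ENNReal.sum_lt_top.mpr _).ne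
      intro w _
      split
      · calc Lfp M T rew w ≤ (1 + ∑ s : S, rew s) * ∑' n, maxAvoid M T n w :=
              Lfp_fin_on_V M T rew w ‹_›
          _ < ⊤ := lt_top_iff_ne_top.mpr (ENNReal.mul_ne_top hRmtop (t_fin M T w ‹_›))
      · exact ENNReal.zero_lt_top
    have hΛge : ∀ w ∈ Vset M T, Lfp M T rew w ≤ Λ := by
      intro w hw
      have h1 := Finset.single_le_sum
        (f := fun w => if w ∈ Vset M T then Lfp M T rew w else 0)
        (fun i _ => zero_le) (Finset.mem_univ w)
      simp only [if_pos hw] at h1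
      exact h1
    have hunroll : ∀ n, ∀ v ∈ Vset M T,
        Lfp M T rew v ≤ M.erBounded σs T rew n v + avoidP M T σs n v * Λ := by
      intro n
      induction n with
      | zero =>
        intro v hv
        by_cases hT : v ∈ T
        · rw [Lfp_T M T rew (V_not_Z M T hv) hT]; exact zero_le
        · simp only [CertMDP.erBounded, avoidP, if_neg hT]
          rw [zero_add, one_mul]
          exact hΛge v hv
      | succ n ih =>
        intro v hv
        by_cases hT : v ∈ T
        · rw [Lfp_T M T rew (V_not_Z M T hv) hT]; exact zero_le
        · rw [hrecV v hv hT]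
          simp only [CertMDP.erBounded, avoidP, if_neg hT]
          have hterm : ∀ w : S, M.P v (σs.1 v) w * Lfp M T rew w ≤
              M.P v (σs.1 v) w * (M.erBounded σs T rew n w + avoidP M T σs n w * Λ) := by
            intro w
            by_cases hP : M.P v (σs.1 v) w = 0
            · simp [hP]
            · exact mul_le_mul_right (ih w (V_closed M T hv hT (σs.2 v) hP)) _
          have h2 : (∑ w : S, M.P v (σs.1 v) w *
                (M.erBounded σs T rew n w + avoidP M T σs n w * Λ))
              = (∑ w : S, M.P v (σs.1 v) w * M.erBounded σs T rew n w)
                + (∑ w : S, M.P v (σs.1 v) w * avoidP M T σs n w) * Λ := by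
            simp only [mul_add]
            rw [Finset.sum_add_distrib, Finset.sum_mul]
            congr 1
            exact Finset.sum_congr rfl (fun w _ => (mul_assoc _ _ _).symm)
          calc rew v + ∑ w : S, M.P v (σs.1 v) w * Lfp M T rew w
              ≤ rew v + ∑ w : S, M.P v (σs.1 v) w *
                  (M.erBounded σs T rew n w + avoidP M T σs n w * Λ) :=
                add_le_add_right (Finset.sum_le_sum fun w _ => hterm w) _
            _ = (rew v + ∑ w : S, M.P v (σs.1 v) w * M.erBounded σs T rew n w)
                + (∑ w : S, M.P v (σs.1 v) w * avoidP M T σs n w) * Λ := by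
                rw [h2, add_assoc]
    have hinf0 : ⨅ n, avoidP M T σs n s = 0 := iInf_avoid_eq_zero M T σs (hAS s hvV)
    have h1 : Lfp M T rew s ≤ ⨆ m, M.erBounded σs T rew m s := by
      calc Lfp M T rew s
          ≤ ⨅ n, (M.erBounded σs T rew n s + avoidP M T σs n s * Λ) :=
            le_iInf (fun n => hunroll n s hvV)
        _ ≤ ⨅ n, ((⨆ m, M.erBounded σs T rew m s) + avoidP M T σs n s * Λ) :=
            iInf_mono (fun n => add_le_add_left (le_iSup (fun m => M.erBounded σs T rew m s) n) _)
        _ = (⨆ m, M.erBounded σs T rew m s) + ⨅ n, avoidP M T σs n s * Λ :=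
            (ENNReal.add_iInf).symm
        _ = (⨆ m, M.erBounded σs T rew m s) + (⨅ n, avoidP M T σs n s) * Λ := by
            rw [ENNReal.iInf_mul (fun h => absurd h hΛtop)]
        _ = ⨆ m, M.erBounded σs T rew m s := by rw [hinf0, zero_mul, add_zero]
    have hER : M.expRew σs T rew s = ⨆ n, M.erBounded σs T rew n s := if_pos (hAS s hvV)
    calc Lfp M T rew s ≤ ⨆ m, M.erBounded σs T rew m s := h1
      _ = M.expRew σs T rew s := hER.symm
      _ ≤ M.optER ODir.dmax T rew s := le_sSup ⟨σs, rfl⟩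
  · rw [notV_optER_top M T rew hvV]
    exact le_top

end CertMDPAux

/-- The least fixed point of `Ẽ^max` exists and equals the maximal expected rewards. -/
theorem stmt18 {S A : Type} [Fintype S] [Fintype A] (M : CertMDP S A) (T : Set S)
    (rew : S → ℝ≥0∞) (hrew : ∀ s, rew s ≠ ⊤) :
    ∃ x : S → ℝ≥0∞, M.modBellmanRMax T rew x = x ∧
      (∀ y : S → ℝ≥0∞, M.modBellmanRMax T rew y = y → x ≤ y) ∧
      ∀ s, x s = M.optER ODir.dmax T rew s := by
  refine ⟨CertMDPAux.Lfp M T rew, CertMDPAux.Lfp_fix M T rew, ?_, ?_⟩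
  · intro y hy
    exact OrderHom.lfp_le_fixed (CertMDPAux.Phi M T rew) hy
  · intro s
    exact le_antisymm (CertMDPAux.Lfp_le_optER M T rew hrew s)
      (CertMDPAux.optER_le_Lfp M T rew s)
end
end
end
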